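/- arXiv:2505.05171 — 9 statements merged into one kernel-verified Lean document; each statement's English description precedes it below -/
import Mathlib

section
/- If x = x_1⋯x_n is a revised ascent sequence of length n ≥ 1, then x_1 = max(x). -/
/-- An endofunction of size `n`: values in `{1,…,n}` (indices are `Fin n`, 0-based). -/
def IsEndo (n : ℕ) (x : Fin n → ℕ) : Prop := ∀ i, 1 ≤ x i ∧ x i ≤ n

/-- The maximum value of `x`. -/
def maxVal (n : ℕ) (x : Fin n → ℕ) : ℕ := Finset.univ.sup x

/-- A Cayley permutation: an endofunction whose image is `{1,…,max x}`. -/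
def IsCayley (n : ℕ) (x : Fin n → ℕ) : Prop :=
  IsEndo n x ∧ ∀ v, 1 ≤ v → v ≤ maxVal n x → ∃ i, x i = v

/-- Ascent bottoms (0-based; index 0 always included). -/
def Ascbot (n : ℕ) (x : Fin n → ℕ) : Set (Fin n) :=
  {i | i.1 = 0 ∨ ∃ h : i.1 + 1 < n, x i < x ⟨i.1 + 1, h⟩}

/-- Indices of leftmost occurrences of values. -/
def Nub (n : ℕ) (x : Fin n → ℕ) : Set (Fin n) :=
  {i | ∀ j, j < i → x j ≠ x i}

/-- A revised ascent sequence. -/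
def IsRAS (n : ℕ) (x : Fin n → ℕ) : Prop :=
  IsCayley n x ∧ Ascbot n x = Nub n x

/-! The leftmost occurrence of the maximum value is a nub, hence an ascent bottom; since nothing
exceeds the maximum it cannot be followed by an ascent, so it must be the first index. -/

theorem le_maxVal {n : ℕ} (x : Fin n → ℕ) (i : Fin n) : x i ≤ maxVal n x :=
  Finset.le_sup (Finset.mem_univ i)

theorem exists_mem_Nub_eq_maxVal {n : ℕ} (hn : 1 ≤ n) (x : Fin n → ℕ) :
    ∃ i ∈ Nub n x, x i = maxVal n x := by
  obtain ⟨j, -, hj⟩ := Finset.exists_mem_eq_sup Finset.univ ⟨⟨0, hn⟩, Finset.mem_univ _⟩ x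
  obtain ⟨i, hi, hmin⟩ :=
    WellFounded.has_min wellFounded_lt {i | x i = maxVal n x} ⟨j, hj.symm⟩
  exact ⟨i, fun k hk hki => hmin k (hki.trans hi) hk, hi⟩

theorem val_eq_zero_of_mem_Ascbot_of_eq_maxVal {n : ℕ} {x : Fin n → ℕ} {i : Fin n}
    (hi : i ∈ Ascbot n x) (hmax : x i = maxVal n x) : i.1 = 0 := by
  rcases hi with hzero | ⟨h, hasc⟩
  · exact hzero
  · exact absurd (le_maxVal x ⟨i.1 + 1, h⟩) (by omega)

theorem stmt1 (n : ℕ) (hn : 1 ≤ n) (x : Fin n → ℕ) (hx : IsRAS n x) :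
    x ⟨0, hn⟩ = maxVal n x := by
  obtain ⟨i, hnub, hmax⟩ := exists_mem_Nub_eq_maxVal hn x
  have hasc : i ∈ Ascbot n x := hx.2 ▸ hnub
  have hzero : (⟨0, hn⟩ : Fin n) = i :=
    Fin.ext (val_eq_zero_of_mem_Ascbot_of_eq_maxVal hasc hmax).symm
  rw [hzero, hmax]
end

section
/- If x = x_1⋯x_n is a revised ascent sequence of length n ≥ 2, then the maximum value max(x) occurs at least twice among x_1,...,x_n. -/
theorem stmt2 (n : ℕ) (hn : 2 ≤ n) (x : Fin n → ℕ) (hx : IsRAS n x) :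
    ∃ i j : Fin n, i ≠ j ∧ x i = maxVal n x ∧ x j = maxVal n x := by
  obtain ⟨⟨hend, hsurj⟩, hAN⟩ := hx
  by_contra h
  push_neg at h
  have hpos : (0:ℕ) < n := by omega
  have hne : (Finset.univ : Finset (Fin n)).Nonempty := ⟨⟨0, hpos⟩, Finset.mem_univ _⟩
  obtain ⟨i0, -, hi0⟩ := Finset.exists_mem_eq_sup Finset.univ hne x
  have hi0' : x i0 = maxVal n x := hi0.symm
  -- max occurs only at i0
  have huniq : ∀ j, j ≠ i0 → x j ≠ maxVal n x := fun j hj hxj => by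
    exact (h i0 j (fun e => hj e.symm) hi0') hxj
  -- i0 ∈ Nub
  have hi0nub : i0 ∈ Nub n x := by
    intro j hj hxj
    exact huniq j (Fin.ne_of_lt hj) (hxj.trans hi0')
  -- hence i0 ∈ Ascbot, and since x i0 is max, i0.1 = 0
  have hi0asc : i0 ∈ Ascbot n x := by rw [hAN]; exact hi0nub
  have hi00 : i0.1 = 0 := by
    rcases hi0asc with h0 | ⟨hlt, hasc⟩
    · exact h0
    · exact absurd hasc (not_lt.mpr (hi0' ▸ Finset.le_sup (Finset.mem_univ _)))
  -- the set of indices other than i0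
  set S : Finset (Fin n) := Finset.univ.filter (fun i => i ≠ i0) with hS
  have hSne : S.Nonempty := by
    refine ⟨⟨1, by omega⟩, Finset.mem_filter.mpr ⟨Finset.mem_univ _, ?_⟩⟩
    intro e
    have := congrArg Fin.val e
    simp [hi00] at this
  obtain ⟨j0, hj0S, hj0⟩ := Finset.exists_mem_eq_sup S hSne x
  set v : ℕ := S.sup x with hv
  have hvne : v ≠ maxVal n x := by
    rw [hj0]
    exact huniq j0 (Finset.mem_filter.mp hj0S).2
  -- leftmost occurrence of v
  set T : Finset (Fin n) := Finset.univ.filter (fun i => x i = v) with hT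
  have hTne : T.Nonempty := ⟨j0, Finset.mem_filter.mpr ⟨Finset.mem_univ _, hj0.symm⟩⟩
  set j : Fin n := T.min' hTne with hjdef
  have hjT : x j = v := (Finset.mem_filter.mp (T.min'_mem hTne)).2
  have hjnub : j ∈ Nub n x := by
    intro k hk hxk
    have hkT : k ∈ T := Finset.mem_filter.mpr ⟨Finset.mem_univ _, hxk.trans hjT⟩
    exact absurd (T.min'_le k hkT) (not_le.mpr hk)
  have hjasc : j ∈ Ascbot n x := by rw [hAN]; exact hjnub
  have hjne0 : j.1 ≠ 0 := by
    intro e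
    have : j = i0 := Fin.ext (e.trans hi00.symm)
    apply hvne
    rw [← hjT, this, hi0']
  rcases hjasc with h0 | ⟨hlt, hasc⟩
  · exact hjne0 h0
  · have hne' : (⟨j.1 + 1, hlt⟩ : Fin n) ≠ i0 := by
      intro e
      have := congrArg Fin.val e
      simp [hi00] at this
    have hmem : (⟨j.1 + 1, hlt⟩ : Fin n) ∈ S :=
      Finset.mem_filter.mpr ⟨Finset.mem_univ _, hne'⟩
    have : x (⟨j.1 + 1, hlt⟩ : Fin n) ≤ v := Finset.le_sup hmem
    omega
end

section
/- If x is a revised ascent sequence of length n, then max(x) = |Ascbot(x)| = |Asctop(x)|. -/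
/-- Ascent tops (0-based; index 0 always included). -/
def Asctop (n : ℕ) (x : Fin n → ℕ) : Set (Fin n) :=
  {i | i.1 = 0 ∨ ∃ _ : 0 < i.1,
    x ⟨i.1 - 1, lt_of_le_of_lt (Nat.sub_le _ _) i.2⟩ < x i}

/-!
Leftmost occurrences `Nub x` are in bijection with the values of `x`, so for a Cayley permutation
`|Nub x| = max x`, and `Ascbot x = Nub x` gives the first equality. Both `Ascbot x` and `Asctop x`
consist of the first position together with a copy of the set of ascents `x i < x (i+1)`
(shifted by one for `Asctop`), so they have the same size as soon as position `0` is not an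
ascent. For a revised ascent sequence it is not: otherwise `Nub x` would consist of ascents, and
following ascents from the start makes `x` strictly increasing, so the last position, which is
never an ascent, would be a leftmost occurrence.
-/

def ascents (n : ℕ) (x : Fin n → ℕ) : Set (Fin n) :=
  {i | ∃ h : i.1 + 1 < n, x i < x ⟨i.1 + 1, h⟩}

section

variable {n : ℕ} (x : Fin n → ℕ)

lemma injOn_nub : Set.InjOn x (Nub n x) := by
  intro i hi j hj hij
  rcases lt_trichotomy i j with h | h | h
  · exact absurd hij (hj i h)
  · exact h
  · exact absurd hij.symm (hi j h)

lemma image_nub : x '' Nub n x = Set.range x := by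
  refine (Set.image_subset_range x _).antisymm ?_
  rintro v ⟨i, rfl⟩
  obtain ⟨j, hj, hmin⟩ := wellFounded_lt.has_min {j | x j = x i} ⟨i, rfl⟩
  exact ⟨j, fun k hk hkj => hmin k (hkj.trans hj) hk, hj⟩

lemma IsCayley.range_eq (hx : IsCayley n x) : Set.range x = Set.Icc 1 (maxVal n x) := by
  ext v
  constructor
  · rintro ⟨i, rfl⟩
    exact ⟨(hx.1 i).1, Finset.le_sup (Finset.mem_univ i)⟩
  · rintro ⟨h1, h2⟩
    exact hx.2 v h1 h2

lemma IsCayley.ncard_nub (hx : IsCayley n x) : (Nub n x).ncard = maxVal n x := by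
  rw [← (injOn_nub x).ncard_image, image_nub, hx.range_eq, ← Finset.coe_Icc,
    Set.ncard_coe_finset, Nat.card_Icc, Nat.add_sub_cancel]

lemma nub_not_subset_ascents (hn : 0 < n) : ¬ Nub n x ⊆ ascents n x := by
  intro hsub
  have hrecord : ∀ k (hk : k < n) (j : Fin n), j.1 < k → x j < x ⟨k, hk⟩ := by
    intro k
    induction k with
    | zero => intro _ j hj; omega
    | succ k ih =>
      intro hk j hj
      have hk' : k < n := by omega
      have hnub : (⟨k, hk'⟩ : Fin n) ∈ Nub n x :=
        fun j hj => (ih hk' j hj).ne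
      obtain ⟨_, hstep⟩ := hsub hnub
      rcases Nat.lt_or_ge j.1 k with hjk | hjk
      · exact (ih hk' j hjk).trans hstep
      · obtain rfl : j = ⟨k, hk'⟩ := Fin.ext (show j.1 = k by omega)
        exact hstep
  have hlast : (⟨n - 1, by omega⟩ : Fin n) ∈ Nub n x :=
    fun j hj => (hrecord (n - 1) _ j hj).ne
  obtain ⟨h, -⟩ := hsub hlast
  exact absurd h (by simp only; omega)

lemma ascbot_eq_insert (hn : 0 < n) : Ascbot n x = insert ⟨0, hn⟩ (ascents n x) := by
  ext i
  simp only [Ascbot, ascents, Set.mem_ofPred_eq, Set.mem_insert_iff, Fin.ext_iff]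

lemma ncard_ascbot (hn : 0 < n) (h0 : ⟨0, hn⟩ ∉ ascents n x) :
    (Ascbot n x).ncard = (ascents n x).ncard + 1 := by
  rw [ascbot_eq_insert x hn, Set.ncard_insert_of_notMem h0]

lemma ncard_asctop (hn : 0 < n) : (Asctop n x).ncard = (ascents n x).ncard + 1 := by
  set T : Set (Fin n) := {i | ∃ _ : 0 < i.1, x ⟨i.1 - 1, by omega⟩ < x i}
  have htop : Asctop n x = insert ⟨0, hn⟩ T := by
    ext i
    simp only [Asctop, T, Set.mem_ofPred_eq, Set.mem_insert_iff, Fin.ext_iff]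
  have h0 : (⟨0, hn⟩ : Fin n) ∉ T := fun ⟨h, _⟩ => h.ne rfl
  have hshift : (ascents n x).ncard = T.ncard :=
    Set.ncard_congr (fun i hi => ⟨i.1 + 1, hi.1⟩)
      (fun _ ⟨_, hlt⟩ => ⟨Nat.succ_pos _, hlt⟩)
      (fun _ _ _ _ h => Fin.ext (by simpa using h))
      (fun j ⟨hj, hlt⟩ => ⟨⟨j.1 - 1, by omega⟩,
        ⟨by simp only; omega, by convert hlt using 2; exact Fin.ext (by simp only; omega)⟩,
        Fin.ext (by simp only; omega)⟩)
  rw [htop, Set.ncard_insert_of_notMem h0, hshift]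

lemma IsRAS.zero_notMem_ascents (hx : IsRAS n x) (hn : 0 < n) : ⟨0, hn⟩ ∉ ascents n x := by
  intro h0
  apply nub_not_subset_ascents x hn
  rw [← hx.2, ascbot_eq_insert x hn, Set.insert_eq_of_mem h0]

end

theorem stmt3 (n : ℕ) (x : Fin n → ℕ) (hx : IsRAS n x) :
    maxVal n x = (Ascbot n x).ncard ∧ maxVal n x = (Asctop n x).ncard := by
  have hbot : maxVal n x = (Ascbot n x).ncard := by rw [hx.2, hx.1.ncard_nub]
  refine ⟨hbot, hbot.trans ?_⟩
  rcases Nat.eq_zero_or_pos n with rfl | hn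
  · simp only [Set.eq_empty_of_isEmpty]
  · rw [ncard_ascbot x hn (hx.zero_notMem_ascents x hn), ncard_asctop x hn]
end

section
/- Let σ = σ_1σ_2⋯σ_k be a Cayley permutation of length k such that σ_2 is the unique occurrence of the maximum value m = max(σ) in σ. Then a revised ascent sequence x of length n avoids the pattern σ if and only if it avoids the pattern mσ (the Cayley permutation of length k+1 obtained by prepending a copy of m to σ). In other words, the sets of σ-avoiding and mσ-avoiding revised ascent sequences of length n coincide. -/
/-- An occurrence of the pattern `σ` (length `k`) in `x` (length `n`):
an order-isomorphic subsequence. -/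
def Occurs (k n : ℕ) (σ : Fin k → ℕ) (x : Fin n → ℕ) : Prop :=
  ∃ f : Fin k → Fin n, StrictMono f ∧
    (∀ s t, x (f s) < x (f t) ↔ σ s < σ t) ∧
    (∀ s t, x (f s) = x (f t) ↔ σ s = σ t)

def Avoids (k n : ℕ) (σ : Fin k → ℕ) (x : Fin n → ℕ) : Prop :=
  ¬ Occurs k n σ x

/-- The pattern `mσ` obtained by prepending the maximum of `σ` to `σ`. -/
def prependMax (k : ℕ) (σ : Fin k → ℕ) : Fin (k + 1) → ℕ :=
  fun j => if h : j.1 = 0 then maxVal k σ else σ ⟨j.1 - 1, by omega⟩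

theorem stmt4 (k : ℕ) (hk : 2 ≤ k) (σ : Fin k → ℕ) (hσ : IsCayley k σ)
    (hmax : σ ⟨1, by omega⟩ = maxVal k σ)
    (huniq : ∀ s : Fin k, σ s = maxVal k σ → s = ⟨1, by omega⟩)
    (n : ℕ) (x : Fin n → ℕ) (hx : IsRAS n x) :
    Avoids k n σ x ↔ Avoids (k + 1) n (prependMax k σ) x := by
  have hk1 : 1 < k := hk
  have hk0 : 0 < k := by omega
  have hpsucc : ∀ s : Fin k, prependMax k σ s.succ = σ s := by
    intro s
    simp [prependMax]
  have hpzero : ∀ t : Fin (k+1), t.1 = 0 → prependMax k σ t = maxVal k σ := by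
    intro t ht; simp [prependMax, ht]
  have hpsucc' : ∀ (t : Fin (k+1)) (h : t.1 ≠ 0) (h2 : t.1 - 1 < k),
      prependMax k σ t = σ ⟨t.1 - 1, h2⟩ := by
    intro t h h2; simp [prependMax, h]
  set i0 : Fin k := ⟨0, hk0⟩ with hi0def
  set i1 : Fin k := ⟨1, hk1⟩ with hi1def
  have hmax' : σ i1 = maxVal k σ := hmax
  have hσmax : ∀ t : Fin k, t ≠ i1 → σ t < σ i1 := by
    intro t ht
    have h1 : σ t ≤ maxVal k σ := Finset.le_sup (Finset.mem_univ t)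
    have h2 : σ t ≠ maxVal k σ := fun h => ht (huniq t h)
    rw [hmax']; omega
  have hi01 : i0 ≠ i1 := by simp [hi0def, hi1def, Fin.ext_iff]
  have hi01' : i0 < i1 := by simp [hi0def, hi1def, Fin.lt_def]
  have key : Occurs k n σ x → Occurs (k+1) n (prependMax k σ) x := by
    intro hocc0
    obtain ⟨f0, hf0m, hf0l, hf0e⟩ := hocc0
    set M := maxVal n x with hMdef
    suffices H : ∀ N (f : Fin k → Fin n), StrictMono f →
        (∀ s t, x (f s) < x (f t) ↔ σ s < σ t) →
        (∀ s t, x (f s) = x (f t) ↔ σ s = σ t) →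
        (M - x (f i1)) * n + (f i1).1 ≤ N →
        Occurs (k+1) n (prependMax k σ) x by
      exact H _ f0 hf0m hf0l hf0e le_rfl
    intro N
    induction N using Nat.strong_induction_on with
    | _ N IH =>
    intro f hmono hlt heq hN
    have hvals : ∀ t, t ≠ i1 → x (f t) < x (f i1) := fun t ht => (hlt t i1).mpr (hσmax t ht)
    by_cases hA : ∃ j : Fin n, j < f i0 ∧ x j = x (f i1)
    · -- success: build the occurrence of prependMax
      obtain ⟨j, hj1, hj2⟩ := hA
      refine ⟨fun t => if h : t.1 = 0 then j else f ⟨t.1 - 1, by omega⟩, ?_, ?_, ?_⟩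
      · intro s t hst
        rw [Fin.lt_def] at hst
        show (if h : s.1 = 0 then j else f ⟨s.1 - 1, by omega⟩) <
          (if h : t.1 = 0 then j else f ⟨t.1 - 1, by omega⟩)
        by_cases hs : s.1 = 0 <;> by_cases ht : t.1 = 0
        · omega
        · rw [dif_pos hs, dif_neg ht]
          exact lt_of_lt_of_le hj1
            (hmono.monotone (by rw [hi0def]; exact Fin.mk_le_mk.mpr (Nat.zero_le _)))
        · omega
        · rw [dif_neg hs, dif_neg ht]
          exact hmono (Fin.mk_lt_mk.mpr (by omega))
      · intro s t
        show x (if h : s.1 = 0 then j else f ⟨s.1 - 1, by omega⟩) <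
          x (if h : t.1 = 0 then j else f ⟨t.1 - 1, by omega⟩) ↔ _
        by_cases hs : s.1 = 0 <;> by_cases ht : t.1 = 0
        · rw [dif_pos hs, dif_pos ht, hpzero s hs, hpzero t ht]
          simp
        · rw [dif_pos hs, dif_neg ht, hpzero s hs, hpsucc' t ht (by omega), hj2, hlt, hmax']
        · rw [dif_neg hs, dif_pos ht, hpsucc' s hs (by omega), hpzero t ht, hj2, hlt, hmax']
        · rw [dif_neg hs, dif_neg ht, hpsucc' s hs (by omega), hpsucc' t ht (by omega)]
          exact hlt _ _
      · intro s t
        show x (if h : s.1 = 0 then j else f ⟨s.1 - 1, by omega⟩) =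
          x (if h : t.1 = 0 then j else f ⟨t.1 - 1, by omega⟩) ↔ _
        by_cases hs : s.1 = 0 <;> by_cases ht : t.1 = 0
        · rw [dif_pos hs, dif_pos ht, hpzero s hs, hpzero t ht]
          simp
        · rw [dif_pos hs, dif_neg ht, hpzero s hs, hpsucc' t ht (by omega), hj2, heq, hmax']
        · rw [dif_neg hs, dif_pos ht, hpsucc' s hs (by omega), hpzero t ht, hj2, heq, hmax']
        · rw [dif_neg hs, dif_neg ht, hpsucc' s hs (by omega), hpsucc' t ht (by omega)]
          exact heq _ _
    · push_neg at hA
      have hupd : ∀ j : Fin n, f i0 < j → (∀ t : Fin k, i1 < t → j < f t) →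
          (∀ t, t ≠ i1 → x (f t) < x j) →
          (StrictMono (Function.update f i1 j) ∧
          (∀ s t, x (Function.update f i1 j s) < x (Function.update f i1 j t) ↔ σ s < σ t) ∧
          (∀ s t, x (Function.update f i1 j s) = x (Function.update f i1 j t) ↔ σ s = σ t)) := by
        intro j hj0 hjt hjv
        refine ⟨?_, ?_, ?_⟩
        · intro s t hst
          rcases eq_or_ne s i1 with hs | hs <;> rcases eq_or_ne t i1 with ht | ht
          · exact absurd (hs.trans ht.symm) (ne_of_lt hst)
          · rw [hs, Function.update_self, Function.update_of_ne ht]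
            exact hjt t (hs ▸ hst)
          · rw [ht, Function.update_self, Function.update_of_ne hs]
            have hs0 : s = i0 := by
              apply Fin.ext
              rw [ht] at hst
              rw [Fin.lt_def] at hst
              simp [hi1def] at hst
              simp [hi0def]; omega
            rw [hs0]; exact hj0
          · rw [Function.update_of_ne hs, Function.update_of_ne ht]; exact hmono hst
        · intro s t
          rcases eq_or_ne s i1 with hs | hs <;> rcases eq_or_ne t i1 with ht | ht
          · subst hs; subst ht; simp
          · subst hs; rw [Function.update_self, Function.update_of_ne ht]
            constructor
            · intro h; exact absurd h (not_lt.mpr (le_of_lt (hjv t ht)))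
            · intro h; exact absurd h (not_lt.mpr (le_of_lt (hσmax t ht)))
          · subst ht; rw [Function.update_of_ne hs, Function.update_self]
            constructor
            · intro _; exact hσmax s hs
            · intro _; exact hjv s hs
          · rw [Function.update_of_ne hs, Function.update_of_ne ht]; exact hlt s t
        · intro s t
          rcases eq_or_ne s i1 with hs | hs <;> rcases eq_or_ne t i1 with ht | ht
          · subst hs; subst ht; simp
          · subst hs; rw [Function.update_self, Function.update_of_ne ht]
            constructor
            · intro h; exact absurd h.symm (ne_of_lt (hjv t ht))
            · intro h; exact absurd h.symm (ne_of_lt (hσmax t ht))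
          · subst ht; rw [Function.update_of_ne hs, Function.update_self]
            constructor
            · intro h; exact absurd h (ne_of_lt (hjv s hs))
            · intro h; exact absurd h (ne_of_lt (hσmax s hs))
          · rw [Function.update_of_ne hs, Function.update_of_ne ht]; exact heq s t
      by_cases hB : ∃ j : Fin n, j < f i1 ∧ x j = x (f i1)
      · -- earlier copy of the value, between f i0 and f i1
        obtain ⟨j, hjlt, hjv⟩ := hB
        have hne : f i0 ≠ j := by
          intro h
          have := hvals i0 hi01
          rw [h, hjv] at this
          exact lt_irrefl _ this
        have hle : f i0 ≤ j := not_lt.mp (fun h => hA j h hjv)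
        have hgt : f i0 < j := lt_of_le_of_ne hle hne
        have hjt : ∀ t : Fin k, i1 < t → j < f t := fun t ht => lt_trans hjlt (hmono ht)
        have hjvs : ∀ t, t ≠ i1 → x (f t) < x j := by
          intro t ht; rw [hjv]; exact hvals t ht
        obtain ⟨hm', hl', he'⟩ := hupd j hgt hjt hjvs
        have hmeas : (M - x (Function.update f i1 j i1)) * n + (Function.update f i1 j i1).1 < N := by
          rw [Function.update_self, hjv]
          have : j.1 < (f i1).1 := hjlt
          omega
        exact IH _ hmeas _ hm' hl' he' le_rfl
      · -- f i1 is the leftmost occurrence of its value: use the RAS property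
        push_neg at hB
        have hNub : f i1 ∈ Nub n x := hB
        have hAsc : f i1 ∈ Ascbot n x := by rw [hx.2]; exact hNub
        have hpos : 0 < (f i1).1 := by
          have := hmono hi01'
          rw [Fin.lt_def] at this
          omega
        rcases hAsc with h0 | ⟨hsn, hasc⟩
        · omega
        · set j : Fin n := ⟨(f i1).1 + 1, hsn⟩ with hjdef
          have hgt : f i0 < j := by
            have := hmono hi01'
            rw [Fin.lt_def] at this ⊢
            simp [hjdef]; omega
          have hjt : ∀ t : Fin k, i1 < t → j < f t := by
            intro t ht
            have h1 : x (f t) < x (f i1) := hvals t (ne_of_gt ht)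
            have h2 : x (f t) < x j := lt_trans h1 hasc
            have hle : j ≤ f t := by
              have := hmono ht
              rw [Fin.lt_def] at this
              rw [Fin.le_def]; simp [hjdef]; omega
            rcases lt_or_eq_of_le hle with h | h
            · exact h
            · rw [h] at h2; exact absurd h2 (lt_irrefl _)
          have hjvs : ∀ t, t ≠ i1 → x (f t) < x j := fun t ht => lt_trans (hvals t ht) hasc
          obtain ⟨hm', hl', he'⟩ := hupd j hgt hjt hjvs
          have hxjM : x j ≤ M := Finset.le_sup (Finset.mem_univ j)
          have hvv : x (f i1) < x j := hasc
          have hmeas : (M - x (Function.update f i1 j i1)) * n + (Function.update f i1 j i1).1 < N := by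
            rw [Function.update_self]
            have hmul : (M - x j) * n + n ≤ (M - x (f i1)) * n := by
              have h1 : (M - x j) + 1 ≤ M - x (f i1) := by omega
              calc (M - x j) * n + n = ((M - x j) + 1) * n := by ring
                _ ≤ (M - x (f i1)) * n := Nat.mul_le_mul_right n h1
            have hjn : j.1 < n := j.2
            omega
          exact IH _ hmeas _ hm' hl' he' le_rfl
  constructor
  · intro hAv hocc
    obtain ⟨g, hg, hgl, hge⟩ := hocc
    apply hAv
    refine ⟨fun s => g s.succ, ?_, ?_, ?_⟩
    · intro s t hst
      exact hg (by rw [Fin.lt_def] at hst ⊢; simpa using hst)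
    · intro s t
      rw [← hpsucc s, ← hpsucc t]
      exact hgl s.succ t.succ
    · intro s t
      rw [← hpsucc s, ← hpsucc t]
      exact hge s.succ t.succ
  · intro hAv hocc
    exact hAv (key hocc)
end

section
/- For every n ≥ 2, the number of revised ascent sequences of length n avoiding the pattern 221 equals n − 1. Moreover, the 221-avoiding revised ascent sequences of length n are exactly the sequences m,1,2,...,m−1,m,m,...,m (i.e., m followed by 1,2,...,m−1 followed by n−m copies of m) for 1 ≤ m ≤ n−1. -/
/-- `x` avoids the pattern `221`. -/
def Avoids221 (n : ℕ) (x : Fin n → ℕ) : Prop :=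
  ¬ ∃ i j k : Fin n, i < j ∧ j < k ∧ x i = x j ∧ x k < x j

/-! In a revised ascent sequence the ascent bottoms are exactly the first occurrences, so after a
first occurrence (other than at index 0) the sequence ascends, and after a repeated value it does
not. Avoiding 221 forbids a descent right after a repeated value, so from the first repeat `t` on
the sequence is constant, while on `[1, t]` it strictly increases; hence the repeated value is
`x 0 = m`. Being a Cayley permutation, the sequence takes every value below `m`, which by
pigeonhole forces the increasing run to be `1, 2, …, m - 1`. -/

def stair (n m : ℕ) : Fin n → ℕ := fun i => if i.1 = 0 then m else if i.1 < m then i.1 else m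

section Stair

variable {n m : ℕ}

lemma stair_cases (i : Fin n) :
    (i.1 ≠ 0 ∧ i.1 < m ∧ stair n m i = i.1) ∨ ((i.1 = 0 ∨ m ≤ i.1) ∧ stair n m i = m) := by
  unfold stair; split_ifs <;> omega

lemma stair_injective (hn : 0 < n) : Function.Injective (stair n) := fun a b hab => by
  simpa [stair] using congrFun hab ⟨0, hn⟩

lemma maxVal_stair (hm : m < n) : maxVal n (stair n m) = m := by
  unfold maxVal
  refine le_antisymm (Finset.sup_le fun i _ => ?_) ?_
  · rcases stair_cases (m := m) i with h | h <;> omega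
  · simpa [stair] using Finset.le_sup (f := stair n m) (Finset.mem_univ (⟨0, by omega⟩ : Fin n))

lemma isCayley_stair (hm1 : 1 ≤ m) (hm : m < n) : IsCayley n (stair n m) := by
  refine ⟨fun i => by rcases stair_cases (m := m) i with h | h <;> omega, fun v hv1 hvm => ?_⟩
  rw [maxVal_stair hm] at hvm
  rcases hvm.lt_or_eq with hvm | rfl
  · exact ⟨⟨v, by omega⟩, by simp only [stair]; split_ifs <;> omega⟩
  · exact ⟨⟨0, by omega⟩, by simp [stair]⟩

lemma ascbot_stair (hm1 : 1 ≤ m) (hm : m < n) : Ascbot n (stair n m) = {i | i.1 < m} := by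
  ext i
  simp only [Ascbot, Set.mem_ofPred_eq]
  constructor
  · rintro (h0 | ⟨hi, hlt⟩)
    · omega
    · rcases stair_cases (m := m) i with h | h <;>
        rcases stair_cases (m := m) ⟨i.1 + 1, hi⟩ with h' | h' <;> simp only at h' <;> omega
  · intro him
    by_cases h0 : i.1 = 0
    · exact Or.inl h0
    have hi : i.1 + 1 < n := by omega
    refine Or.inr ⟨hi, ?_⟩
    rcases stair_cases (m := m) i with h | h <;>
      rcases stair_cases (m := m) ⟨i.1 + 1, hi⟩ with h' | h' <;> simp only at h' <;> omega

lemma nub_stair (hm1 : 1 ≤ m) : Nub n (stair n m) = {i | i.1 < m} := by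
  ext i
  simp only [Nub, Set.mem_ofPred_eq]
  constructor
  · intro hnub
    by_contra! hmi
    exact hnub ⟨0, i.pos⟩ (Fin.mk_lt_of_lt_val (by omega))
      (by simp only [stair]; split_ifs <;> omega)
  · intro him j hji
    have : j.1 < i.1 := hji
    rcases stair_cases (m := m) i with h | h <;> rcases stair_cases (m := m) j with h' | h' <;>
      omega

lemma isRAS_stair (hm1 : 1 ≤ m) (hm : m < n) : IsRAS n (stair n m) :=
  ⟨isCayley_stair hm1 hm, by rw [ascbot_stair hm1 hm, nub_stair hm1]⟩

lemma avoids221_stair : Avoids221 n (stair n m) := by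
  rintro ⟨i, j, k, hij, hjk, hxij, hxk⟩
  have : i.1 < j.1 := hij
  have : j.1 < k.1 := hjk
  rcases stair_cases (m := m) i with hi | hi <;> rcases stair_cases (m := m) j with hj | hj <;>
    rcases stair_cases (m := m) k with hk | hk <;> omega

end Stair

section Shape

variable {n : ℕ} {x : Fin n → ℕ}

lemma zero_mem_nub (i : Fin n) (hi : i.1 = 0) : i ∈ Nub n x := fun j hj => by
  have : j.1 < i.1 := hj
  omega

lemma lt_succ_of_mem_nub (hAN : Ascbot n x = Nub n x) {i : Fin n} (hi0 : i.1 ≠ 0)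
    (hi : i.1 + 1 < n) (hnub : i ∈ Nub n x) : x i < x ⟨i.1 + 1, hi⟩ := by
  rw [← hAN] at hnub
  rcases hnub with h0 | ⟨_, hlt⟩
  · exact absurd h0 hi0
  · exact hlt

lemma succ_eq_of_notMem_nub (hAN : Ascbot n x = Nub n x) (hav : Avoids221 n x) {i : Fin n}
    (hi : i.1 + 1 < n) (hnub : i ∉ Nub n x) : x ⟨i.1 + 1, hi⟩ = x i := by
  obtain ⟨j, hji, hxj⟩ : ∃ j < i, x j = x i := by simpa [Nub] using hnub
  have hasc : ¬ x i < x ⟨i.1 + 1, hi⟩ := fun h => by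
    rw [← hAN] at hnub
    exact hnub (Or.inr ⟨hi, h⟩)
  have hdesc : ¬ x ⟨i.1 + 1, hi⟩ < x i := fun h =>
    hav ⟨j, i, ⟨i.1 + 1, hi⟩, hji, Fin.lt_def.2 (Nat.lt_succ_self _), hxj, h⟩
  omega

lemma eq_of_notMem_nub_of_le (hAN : Ascbot n x = Nub n x) (hav : Avoids221 n x) {t i : Fin n}
    (ht : t ∉ Nub n x) (hti : t ≤ i) : x i = x t := by
  suffices ∀ k (hk : k < n), t.1 ≤ k → (⟨k, hk⟩ : Fin n) ∉ Nub n x ∧ x ⟨k, hk⟩ = x t from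
    (this i.1 i.2 hti).2
  intro k hk htk
  induction k, htk using Nat.le_induction with
  | base => exact ⟨ht, rfl⟩
  | succ k htk ih =>
    obtain ⟨hnub, hxk⟩ := ih (by omega)
    have hstep := succ_eq_of_notMem_nub hAN hav (i := ⟨k, by omega⟩) hk hnub
    refine ⟨fun h => h ⟨k, by omega⟩ (Fin.lt_def.2 (Nat.lt_succ_self _)) hstep.symm, ?_⟩
    exact hstep.trans hxk

lemma add_sub_le_of_mem_nub (hAN : Ascbot n x = Nub n x) {i j : Fin n} (hi0 : i.1 ≠ 0)
    (hij : i ≤ j) (hnub : ∀ k, i ≤ k → k < j → k ∈ Nub n x) : x i + (j.1 - i.1) ≤ x j := by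
  obtain ⟨j, hj⟩ := j
  replace hij : i.1 ≤ j := hij
  induction j, hij using Nat.le_induction with
  | base => simp
  | succ j hij ih =>
    have hstep := lt_succ_of_mem_nub hAN (i := ⟨j, by omega⟩) (by simp only; omega) hj
      (hnub _ hij (Fin.lt_def.2 (Nat.lt_succ_self _)))
    have := ih (by omega) fun k hik hkj => hnub k hik (hkj.trans (by simp))
    simp only at hstep this ⊢
    omega

lemma exists_first_notMem_nub (hAN : Ascbot n x = Nub n x) (hn : 2 ≤ n) :
    ∃ t : Fin n, t ∉ Nub n x ∧ ∀ k < t, k ∈ Nub n x := by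
  have hlast : (⟨n - 1, by omega⟩ : Fin n) ∉ Nub n x := by
    rw [← hAN]
    rintro (h0 | ⟨h, -⟩) <;> simp only at * <;> omega
  obtain ⟨t, ht, hmin⟩ := wellFounded_lt.has_min {k | k ∉ Nub n x} ⟨_, hlast⟩
  exact ⟨t, ht, fun k hk => by_contra fun h => hmin k h hk⟩

lemma exists_increasing_then_const (hAN : Ascbot n x = Nub n x) (hav : Avoids221 n x)
    (hn : 2 ≤ n) :
    ∃ t : Fin n, t.1 ≠ 0 ∧ (∀ i, t ≤ i → x i = x ⟨0, t.pos⟩) ∧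
      ∀ i j : Fin n, i.1 ≠ 0 → i ≤ j → j ≤ t → x i + (j.1 - i.1) ≤ x j := by
  obtain ⟨t, ht, hmin⟩ := exists_first_notMem_nub hAN hn
  have ht0 : t.1 ≠ 0 := fun h => ht (zero_mem_nub t h)
  have hinc : ∀ i j : Fin n, i.1 ≠ 0 → i ≤ j → j ≤ t → x i + (j.1 - i.1) ≤ x j :=
    fun i j hi0 hij hjt =>
      add_sub_le_of_mem_nub hAN hi0 hij fun k _ hkj => hmin k (lt_of_lt_of_le hkj hjt)
  have hxt : x t = x ⟨0, t.pos⟩ := by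
    obtain ⟨j, hjt, hxj⟩ : ∃ j < t, x j = x t := by simpa [Nub] using ht
    by_cases hj0 : j.1 = 0
    · rw [← hxj, show j = ⟨0, t.pos⟩ from Fin.ext hj0]
    · have := hinc j t hj0 hjt.le le_rfl
      have : j.1 < t.1 := hjt
      omega
  exact ⟨t, ht0, fun i hti => (eq_of_notMem_nub_of_le hAN hav ht hti).trans hxt, hinc⟩

-- pigeonhole: the values `1, …, x 0 - 1` all occur, at indices in `[1, t)`
lemma apply_zero_le_of_isCayley (hC : IsCayley n x) {t : Fin n} (ht0 : t.1 ≠ 0)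
    (hconst : ∀ i, t ≤ i → x i = x ⟨0, t.pos⟩) : x ⟨0, t.pos⟩ ≤ t.1 := by
  set m := x ⟨0, t.pos⟩
  have hbound : ∀ k ∈ Finset.Ico 1 t.1, k < n := fun k hk => by rw [Finset.mem_Ico] at hk; omega
  have hcover : Finset.Icc 1 (m - 1) ⊆ ((Finset.Ico 1 t.1).attachFin hbound).image x := by
    intro v hv
    simp only [Finset.mem_Icc] at hv
    have hmax : m ≤ maxVal n x := Finset.le_sup (Finset.mem_univ _)
    obtain ⟨i, hxi⟩ := hC.2 v hv.1 (by omega)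
    have hi0 : i.1 ≠ 0 := fun h => by rw [Fin.ext (b := ⟨0, t.pos⟩) h] at hxi; omega
    have hit : i < t := lt_of_not_ge fun hti => by rw [hconst i hti] at hxi; omega
    have : i.1 < t.1 := hit
    exact Finset.mem_image.2 ⟨i, by rw [Finset.mem_attachFin, Finset.mem_Ico]; omega, hxi⟩
  have := (Finset.card_le_card hcover).trans Finset.card_image_le
  simp only [Nat.card_Icc, Finset.card_attachFin, Nat.card_Ico] at this
  omega

lemma eq_stair_of_isCayley (hC : IsCayley n x) {t : Fin n} (ht0 : t.1 ≠ 0)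
    (hconst : ∀ i, t ≤ i → x i = x ⟨0, t.pos⟩)
    (hinc : ∀ i j : Fin n, i.1 ≠ 0 → i ≤ j → j ≤ t → x i + (j.1 - i.1) ≤ x j) :
    x = stair n t := by
  set m := x ⟨0, t.pos⟩
  have hxt : x t = m := hconst t le_rfl
  have hlow : ∀ i : Fin n, i.1 ≠ 0 → i ≤ t → i.1 ≤ x i := fun i hi0 hit => by
    have h1 := (hC.1 ⟨1, by omega⟩).1
    have := hinc ⟨1, by omega⟩ i (by simp) (Fin.le_def.2 (show 1 ≤ i.1 by omega)) hit
    simp only at this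
    omega
  have hup : ∀ i : Fin n, i.1 ≠ 0 → i ≤ t → x i + (t.1 - i.1) ≤ m := fun i hi0 hit =>
    hxt ▸ hinc i t hi0 hit le_rfl
  have htm : t.1 ≤ m := hxt ▸ hlow t ht0 le_rfl
  have hmt : m ≤ t.1 := apply_zero_le_of_isCayley hC ht0 hconst
  funext i
  rcases stair_cases (m := t.1) i with ⟨hi0, hit, hs⟩ | ⟨hi, hs⟩
  · have := hlow i hi0 (Fin.le_def.2 hit.le)
    have := hup i hi0 (Fin.le_def.2 hit.le)
    omega
  · rw [hs]
    rcases hi with hi0 | hti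
    · rw [Fin.ext (b := ⟨0, t.pos⟩) hi0]; omega
    · rw [hconst i hti]; omega

lemma exists_eq_stair (hn : 2 ≤ n) (hras : IsRAS n x) (hav : Avoids221 n x) :
    ∃ m, 1 ≤ m ∧ m ≤ n - 1 ∧ x = stair n m := by
  obtain ⟨t, ht0, hconst, hinc⟩ := exists_increasing_then_const hras.2 hav hn
  exact ⟨t.1, by omega, by omega, eq_stair_of_isCayley hras.1 ht0 hconst hinc⟩

end Shape

theorem stmt7 (n : ℕ) (hn : 2 ≤ n) :
    {x : Fin n → ℕ | IsRAS n x ∧ Avoids221 n x}.ncard = n - 1 ∧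
    ∀ x : Fin n → ℕ, (IsRAS n x ∧ Avoids221 n x) ↔
      ∃ m, 1 ≤ m ∧ m ≤ n - 1 ∧
        x = fun i => if i.1 = 0 then m else if i.1 < m then i.1 else m := by
  have hiff : ∀ x : Fin n → ℕ, (IsRAS n x ∧ Avoids221 n x) ↔
      ∃ m, 1 ≤ m ∧ m ≤ n - 1 ∧ x = stair n m := fun x =>
    ⟨fun h => exists_eq_stair hn h.1 h.2, by
      rintro ⟨m, hm1, hm, rfl⟩
      exact ⟨isRAS_stair hm1 (by omega), avoids221_stair⟩⟩
  refine ⟨?_, hiff⟩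
  have hset : {x : Fin n → ℕ | IsRAS n x ∧ Avoids221 n x} = stair n '' Set.Icc 1 (n - 1) := by
    ext x
    simp only [Set.mem_ofPred_eq, hiff, Set.mem_image, Set.mem_Icc, and_assoc, eq_comm]
  rw [hset, Set.ncard_image_of_injective _ (stair_injective (by omega)), Set.ncard_Icc_nat]
  omega
end

section
/- For every n ≥ 2, the number of revised ascent sequences of length n avoiding the pattern 312 equals 2^{n−2}. -/
/-- `x` avoids the pattern `312`. -/
def Avoids312 (n : ℕ) (x : Fin n → ℕ) : Prop :=
  ¬ ∃ i j k : Fin n, i < j ∧ j < k ∧ x j < x k ∧ x k < x i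

namespace Aux

variable {n : ℕ}

/-- successor value indicator -/
def nxt (v : Fin n → Bool) (i : Fin n) : Bool :=
  if h : i.1 + 1 < n then v ⟨i.1 + 1, h⟩ else false

def riseB (v : Fin n → Bool) (i : Fin n) : Bool := !v i && nxt v i

def Rset (v : Fin n → Bool) : Finset (Fin n) :=
  Finset.univ.filter (fun j => riseB v j = true)

def mOf (v : Fin n → Bool) : ℕ := (Rset v).card + 1

def Rcnt (v : Fin n → Bool) (i : Fin n) : ℕ :=
  ((Rset v).filter (fun j => j < i)).card

def dec (v : Fin n → Bool) (i : Fin n) : ℕ :=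
  if v i then mOf v else mOf v - (Rcnt v i + (if nxt v i then 1 else 0))

def vcond (n : ℕ) (v : Fin n → Bool) : Prop :=
  (∀ h : 0 < n, v ⟨0, h⟩ = true) ∧
  ∀ i, v i = false → (∀ j, j < i → v j = true) → nxt v i = true

instance : DecidablePred (vcond n) := fun v => by
  unfold vcond; infer_instance

def Vfin (n : ℕ) : Finset (Fin n → Bool) := Finset.univ.filter (vcond n)

lemma mem_Rset {v : Fin n → Bool} {j : Fin n} :
    j ∈ Rset v ↔ riseB v j = true := by simp [Rset]

lemma rise_false {v : Fin n → Bool} {j : Fin n} (h : riseB v j = true) : v j = false := by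
  simp [riseB] at h; exact h.1

lemma rise_nxt {v : Fin n → Bool} {j : Fin n} (h : riseB v j = true) : nxt v j = true := by
  simp [riseB] at h; exact h.2

lemma nxt_def {v : Fin n → Bool} {i : Fin n} (h : nxt v i = true) :
    ∃ h' : i.1 + 1 < n, v ⟨i.1 + 1, h'⟩ = true := by
  unfold nxt at h
  split at h
  · exact ⟨‹_›, h⟩
  · simp at h

lemma Rcnt_mono {v : Fin n → Bool} {i k : Fin n} (h : i ≤ k) : Rcnt v i ≤ Rcnt v k := by
  apply Finset.card_le_card
  intro j hj
  simp only [Finset.mem_filter] at hj ⊢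
  exact ⟨hj.1, lt_of_lt_of_le hj.2 h⟩

lemma Rcnt_rise_lt {v : Fin n → Bool} {j k : Fin n} (hr : riseB v j = true) (h : j < k) :
    Rcnt v j + 1 ≤ Rcnt v k := by
  have hsub : insert j ((Rset v).filter (fun r => r < j)) ⊆ (Rset v).filter (fun r => r < k) := by
    intro r hr'
    simp only [Finset.mem_insert, Finset.mem_filter] at hr' ⊢
    rcases hr' with rfl | ⟨h1, h2⟩
    · exact ⟨mem_Rset.2 hr, h⟩
    · exact ⟨h1, h2.trans h⟩
  have := Finset.card_le_card hsub
  rwa [Finset.card_insert_of_notMem (by simp)] at this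

lemma Rcnt_le {v : Fin n → Bool} {i : Fin n} (hf : v i = false) :
    Rcnt v i + (if nxt v i then 1 else 0) ≤ (Rset v).card := by
  by_cases h : nxt v i = true
  · simp only [h, if_true]
    have hri : riseB v i = true := by simp [riseB, hf, h]
    have hsub : insert i ((Rset v).filter (fun r => r < i)) ⊆ Rset v := by
      intro r hr'
      simp only [Finset.mem_insert, Finset.mem_filter] at hr'
      rcases hr' with rfl | ⟨h1, _⟩
      · exact mem_Rset.2 hri
      · exact h1
    have hc := Finset.card_le_card hsub
    have hnm : i ∉ (Rset v).filter (fun r => r < i) := by simp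
    rwa [Finset.card_insert_of_notMem hnm] at hc
  · simp only [h, if_false, add_zero]
    exact Finset.card_le_card (Finset.filter_subset (fun j => j < i) (Rset v))


lemma Rcnt_pos {v : Fin n → Bool} (hv : vcond n v) {i : Fin n} (hf : v i = false) :
    1 ≤ Rcnt v i + (if nxt v i then 1 else 0) := by
  by_cases h : nxt v i = true
  · simp [h]
  · -- find first false f ≤ i; it is a rise strictly below i
    classical
    set F := Finset.univ.filter (fun j : Fin n => v j = false ∧ j ≤ i) with hF
    have hne : F.Nonempty := ⟨i, by simp [hF, hf]⟩
    set f := F.min' hne with hfdef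
    have hfmem : f ∈ F := F.min'_mem hne
    simp only [hF, Finset.mem_filter] at hfmem
    have hfirst : ∀ j, j < f → v j = true := by
      intro j hj
      by_contra hjf
      have hjf' : v j = false := by revert hjf; cases v j <;> simp
      have : f ≤ j := F.min'_le j (by simp [hF, hjf', le_of_lt (lt_of_lt_of_le hj hfmem.2.2)])
      exact absurd hj (not_lt.2 this)
    have hnxtf : nxt v f = true := hv.2 f hfmem.2.1 hfirst
    have hfi : f < i := by
      rcases lt_or_eq_of_le hfmem.2.2 with h' | h'
      · exact h'
      · exact absurd (h' ▸ hnxtf) h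
    have hrise : riseB v f = true := by simp [riseB, hfmem.2.1, hnxtf]
    have : f ∈ (Rset v).filter (fun j => j < i) := by
      simp [Finset.mem_filter, mem_Rset, hrise, hfi]
    have hpos : 0 < Rcnt v i := Finset.card_pos.2 ⟨f, this⟩
    omega

lemma dec_le {v : Fin n → Bool} (i : Fin n) : dec v i ≤ mOf v := by
  unfold dec; split
  · exact le_rfl
  · exact Nat.sub_le _ _

lemma dec_false_lt {v : Fin n → Bool} (hv : vcond n v) {i : Fin n} (hf : v i = false) :
    dec v i < mOf v := by
  have h1 := Rcnt_pos hv hf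
  have : dec v i = mOf v - (Rcnt v i + (if nxt v i then 1 else 0)) := by
    unfold dec; simp [hf]
  rw [this]
  have : 0 < mOf v := by unfold mOf; omega
  omega

lemma dec_pos {v : Fin n → Bool} (i : Fin n) : 1 ≤ dec v i := by
  unfold dec; split
  · unfold mOf; omega
  · rename_i hf
    have hf' : v i = false := by revert hf; cases v i <;> simp
    have := Rcnt_le hf'
    unfold mOf at *
    omega

lemma dec_true {v : Fin n → Bool} {i : Fin n} (h : v i = true) : dec v i = mOf v := by
  unfold dec; simp [h]

lemma dec_max {v : Fin n → Bool} (hv : vcond n v) (hn : 0 < n) :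
    maxVal n (dec v) = mOf v := by
  apply le_antisymm
  · exact Finset.sup_le (fun i _ => dec_le i)
  · have h0 : dec v ⟨0, hn⟩ = mOf v := dec_true (hv.1 hn)
    calc mOf v = dec v ⟨0, hn⟩ := h0.symm
    _ ≤ _ := Finset.le_sup (Finset.mem_univ _)

lemma dec_eq_max_iff {v : Fin n → Bool} (hv : vcond n v) {i : Fin n} :
    dec v i = mOf v ↔ v i = true := by
  constructor
  · intro h
    by_contra hf
    have hf' : v i = false := by revert hf; cases v i <;> simp
    exact absurd h (Nat.ne_of_lt (dec_false_lt hv hf'))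
  · exact dec_true

lemma dec_mono_false {v : Fin n → Bool} {j k : Fin n}
    (hj : v j = false) (hk : v k = false) (hjk : j < k) : dec v k ≤ dec v j := by
  have h1 : Rcnt v j + (if nxt v j then 1 else 0) ≤ Rcnt v k + (if nxt v k then 1 else 0) := by
    by_cases h : nxt v j = true
    · have : riseB v j = true := by simp [riseB, hj, h]
      have := Rcnt_rise_lt this hjk
      simp only [h, if_true]
      omega
    · have hnj : nxt v j = false := by revert h; cases nxt v j <;> simp
      have hm : Rcnt v j ≤ Rcnt v k := Rcnt_mono (le_of_lt hjk)
      simp only [hnj, Bool.false_eq_true, if_false, add_zero]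
      omega
  unfold dec
  simp only [hj, hk, if_false, Bool.false_eq_true]
  omega


lemma dec_rise_new {v : Fin n → Bool} (hv : vcond n v) {i : Fin n} (hr : riseB v i = true) :
    ∀ j, j < i → dec v j ≠ dec v i := by
  intro j hj heq
  have hfi : v i = false := rise_false hr
  have hni : nxt v i = true := rise_nxt hr
  by_cases hvj : v j = true
  · rw [dec_true hvj] at heq
    exact absurd heq.symm (Nat.ne_of_lt (dec_false_lt hv hfi))
  · have hvj' : v j = false := by revert hvj; cases v j <;> simp
    have hbj := Rcnt_le hvj'
    have hbi := Rcnt_le hfi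
    have hdj : dec v j = mOf v - (Rcnt v j + (if nxt v j then 1 else 0)) := by
      unfold dec; simp [hvj']
    have hdi : dec v i = mOf v - (Rcnt v i + 1) := by
      unfold dec; simp [hfi, hni]
    have hmOf : mOf v = (Rset v).card + 1 := rfl
    by_cases hnj : nxt v j = true
    · have hrise : riseB v j = true := by simp [riseB, hvj', hnj]
      have := Rcnt_rise_lt hrise hj
      simp only [hnj, if_true] at heq hdj hbj
      omega
    · have hnj' : nxt v j = false := by revert hnj; cases nxt v j <;> simp
      have hm : Rcnt v j ≤ Rcnt v i := Rcnt_mono (le_of_lt hj)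
      simp only [hnj', Bool.false_eq_true, if_false, add_zero] at hdj hbj
      omega

lemma dec_nonrise_old {v : Fin n → Bool} (hv : vcond n v) {i : Fin n}
    (hfi : v i = false) (hnr : riseB v i = false) :
    ∃ j, j < i ∧ dec v j = dec v i := by
  have hnxt : nxt v i = false := by
    revert hnr; simp [riseB, hfi]
  have hc : 1 ≤ Rcnt v i := by
    have := Rcnt_pos hv hfi
    simp only [hnxt, Bool.false_eq_true, if_false, add_zero] at this
    exact this
  set T := (Rset v).filter (fun r => r < i) with hT
  have hTne : T.Nonempty := Finset.card_pos.1 (by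
    have hrc : Rcnt v i = T.card := rfl
    omega)
  set j := T.max' hTne with hjdef
  have hjmem : j ∈ T := T.max'_mem hTne
  have hjm : j ∈ Rset v ∧ j < i := by simpa [hT, Finset.mem_filter] using hjmem
  have hrj : riseB v j = true := mem_Rset.1 hjm.1
  have hkey : (Rset v).filter (fun r => r < j) = T.erase j := by
    ext r
    simp only [hT, Finset.mem_filter, Finset.mem_erase]
    constructor
    · rintro ⟨h1, h2⟩
      exact ⟨ne_of_lt h2, h1, h2.trans hjm.2⟩
    · rintro ⟨h1, h2, h3⟩
      refine ⟨h2, ?_⟩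
      have : r ≤ j := T.le_max' r (by simp [hT, Finset.mem_filter, h2, h3])
      exact lt_of_le_of_ne this h1
  have hcard : Rcnt v j = Rcnt v i - 1 := by
    unfold Rcnt
    rw [hkey, Finset.card_erase_of_mem hjmem]
  have hdj : dec v j = mOf v - (Rcnt v j + 1) := by
    unfold dec; simp [rise_false hrj, rise_nxt hrj]
  have hdi : dec v i = mOf v - Rcnt v i := by
    unfold dec; simp [hfi, hnxt]
  exact ⟨j, hjm.2, by rw [hdj, hdi]; omega⟩

lemma dec_nub {v : Fin n → Bool} (hv : vcond n v) :
    Nub n (dec v) = {i | i.1 = 0 ∨ riseB v i = true} := by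
  ext i
  simp only [Nub, Set.mem_setOf_eq]
  constructor
  · intro hnub
    by_cases h0 : i.1 = 0
    · exact Or.inl h0
    · right
      by_contra hnr
      have hnr' : riseB v i = false := by revert hnr; cases riseB v i <;> simp
      by_cases hvi : v i = true
      · have h0n : (0 : ℕ) < n := lt_of_le_of_lt (Nat.zero_le _) i.2
        have hlt : (⟨0, h0n⟩ : Fin n) < i := by
          simp [Fin.lt_def]; omega
        exact hnub ⟨0, h0n⟩ hlt (by rw [dec_true (hv.1 h0n), dec_true hvi])
      · have hvi' : v i = false := by revert hvi; cases v i <;> simp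
        obtain ⟨j, hj, hje⟩ := dec_nonrise_old hv hvi' hnr'
        exact hnub j hj hje
  · rintro (h0 | hr)
    · intro j hj
      exact absurd (Fin.lt_def.1 hj) (by omega)
    · exact dec_rise_new hv hr

lemma dec_ascbot {v : Fin n → Bool} (hv : vcond n v) :
    Ascbot n (dec v) = {i | i.1 = 0 ∨ riseB v i = true} := by
  ext i
  simp only [Ascbot, Set.mem_setOf_eq]
  constructor
  · rintro (h0 | ⟨h, hlt⟩)
    · exact Or.inl h0
    · right
      by_contra hnr
      have hnr' : riseB v i = false := by revert hnr; cases riseB v i <;> simp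
      by_cases hvi : v i = true
      · rw [dec_true hvi] at hlt
        exact absurd hlt (not_lt.2 (dec_le _))
      · have hvi' : v i = false := by revert hvi; cases v i <;> simp
        have hnxt : nxt v i = false := by revert hnr'; simp [riseB, hvi']
        have hsucc : v ⟨i.1 + 1, h⟩ = false := by
          unfold nxt at hnxt
          rw [dif_pos h] at hnxt
          exact hnxt
        have := dec_mono_false hvi' hsucc (by simp [Fin.lt_def])
        omega
  · rintro (h0 | hr)
    · exact Or.inl h0
    · right
      obtain ⟨h, hsucc⟩ := nxt_def (rise_nxt hr)
      refine ⟨h, ?_⟩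
      rw [dec_true hsucc]
      exact dec_false_lt hv (rise_false hr)

lemma exists_kth (s : Finset (Fin n)) :
    ∀ t, t < s.card → ∃ j ∈ s, (s.filter (fun r => r < j)).card = t := by
  intro t
  induction t with
  | zero =>
    intro ht
    have hne : s.Nonempty := Finset.card_pos.1 (by omega)
    refine ⟨s.min' hne, s.min'_mem hne, ?_⟩
    rw [Finset.card_eq_zero, Finset.filter_eq_empty_iff]
    intro r hr
    exact not_lt.2 (s.min'_le r hr)
  | succ t ih =>
    intro ht
    obtain ⟨j, hjs, hjc⟩ := ih (by omega)
    set U := s.filter (fun r => j < r) with hU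
    have hUne : U.Nonempty := by
      by_contra hUe
      rw [Finset.not_nonempty_iff_eq_empty, hU, Finset.filter_eq_empty_iff] at hUe
      have hsub : s ⊆ insert j (s.filter (fun r => r < j)) := by
        intro r hr
        simp only [Finset.mem_insert, Finset.mem_filter]
        rcases lt_trichotomy r j with h | h | h
        · exact Or.inr ⟨hr, h⟩
        · exact Or.inl h
        · exact absurd h (by intro hh; exact hUe hr hh)
      have := Finset.card_le_card hsub
      have := Finset.card_insert_le j (s.filter (fun r => r < j))
      omega
    set j' := U.min' hUne with hj'def
    have hj'mem : j' ∈ U := U.min'_mem hUne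
    have hj'm : j' ∈ s ∧ j < j' := by simpa [hU, Finset.mem_filter] using hj'mem
    refine ⟨j', hj'm.1, ?_⟩
    have hkey : s.filter (fun r => r < j') = insert j (s.filter (fun r => r < j)) := by
      ext r
      simp only [Finset.mem_filter, Finset.mem_insert]
      constructor
      · rintro ⟨h1, h2⟩
        rcases lt_trichotomy r j with h | h | h
        · exact Or.inr ⟨h1, h⟩
        · exact Or.inl h
        · have : r ∈ U := by simp [hU, Finset.mem_filter, h1, h]
          exact absurd (U.min'_le r this) (not_le.2 h2)
      · rintro (rfl | ⟨h1, h2⟩)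
        · exact ⟨hjs, hj'm.2⟩
        · exact ⟨h1, h2.trans hj'm.2⟩
    rw [hkey, Finset.card_insert_of_notMem (by simp), hjc]

lemma dec_cayley {v : Fin n → Bool} (hv : vcond n v) (hn : 0 < n) :
    ∀ c, 1 ≤ c → c ≤ mOf v → ∃ i, dec v i = c := by
  intro c hc1 hc2
  rcases eq_or_lt_of_le hc2 with h | h
  · exact ⟨⟨0, hn⟩, by rw [dec_true (hv.1 hn), h]⟩
  · have hmOf : mOf v = (Rset v).card + 1 := rfl
    obtain ⟨j, hjs, hjc⟩ := exists_kth (Rset v) ((Rset v).card - c) (by omega)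
    have hrj : riseB v j = true := mem_Rset.1 hjs
    refine ⟨j, ?_⟩
    have hdj : dec v j = mOf v - (Rcnt v j + 1) := by
      unfold dec; simp [rise_false hrj, rise_nxt hrj]
    have : Rcnt v j = (Rset v).card - c := hjc
    omega

lemma mOf_le {v : Fin n → Bool} (hv : vcond n v) (hn : 0 < n) : mOf v ≤ n := by
  have hsub : Rset v ⊆ Finset.univ.erase ⟨0, hn⟩ := by
    intro j hj
    have hrj := mem_Rset.1 hj
    simp only [Finset.mem_erase, Finset.mem_univ, and_true]
    intro h
    rw [h] at hrj
    simp [riseB, hv.1 hn] at hrj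
  have := Finset.card_le_card hsub
  rw [Finset.card_erase_of_mem (Finset.mem_univ _)] at this
  simp only [Finset.card_univ, Fintype.card_fin] at this
  unfold mOf
  omega

lemma dec_avoid {v : Fin n → Bool} : Avoids312 n (dec v) := by
  rintro ⟨i, j, k, hij, hjk, h1, h2⟩
  have hk : v k = false := by
    by_contra hk'
    have hk'' : v k = true := by revert hk'; cases v k <;> simp
    rw [dec_true hk''] at h2
    exact absurd h2 (not_lt.2 (dec_le _))
  by_cases hj' : v j = true
  · rw [dec_true hj'] at h1
    have := (dec_le k).trans_lt' h1
    omega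
  · have hj'' : v j = false := by revert hj'; cases v j <;> simp
    exact absurd h1 (not_lt.2 (dec_mono_false hj'' hk hjk))

lemma dec_isRAS {v : Fin n → Bool} (hv : vcond n v) (hn : 0 < n) : IsRAS n (dec v) := by
  refine ⟨⟨fun i => ⟨dec_pos i, (dec_le i).trans (mOf_le hv hn)⟩, ?_⟩, ?_⟩
  · intro c hc1 hc2
    exact dec_cayley hv hn c hc1 (by rwa [dec_max hv hn] at hc2)
  · rw [dec_ascbot hv, dec_nub hv]


section Encode

variable {x : Fin n → ℕ}

/-- `newAt x i` means position `i` is a leftmost occurrence. -/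
def newAt (x : Fin n → ℕ) (i : Fin n) : Prop := ∀ j, j < i → x j ≠ x i

lemma mem_nub_iff {i : Fin n} : i ∈ Nub n x ↔ newAt x i := Iff.rfl

lemma exists_first {P : Fin n → Prop} [DecidablePred P] (h : ∃ i, P i) :
    ∃ p, P p ∧ (∀ r, r < p → ¬ P r) := by
  classical
  obtain ⟨i, hi⟩ := h
  set F := Finset.univ.filter P with hF
  have hne : F.Nonempty := ⟨i, by simp [hF, hi]⟩
  refine ⟨F.min' hne, ?_, ?_⟩
  · have := F.min'_mem hne
    simpa [hF] using this
  · intro r hr hPr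
    have : F.min' hne ≤ r := F.min'_le r (by simp [hF, hPr])
    exact absurd hr (not_lt.2 this)

variable (hras : IsRAS n x) (hav : Avoids312 n x)

include hras

omit hras in
lemma w_le (i : Fin n) : x i ≤ maxVal n x := Finset.le_sup (Finset.mem_univ i)

lemma w_pos (i : Fin n) : 1 ≤ x i := (hras.1.1 i).1



lemma w_nub_asc {i : Fin n} (hnub : i ∈ Nub n x) (h0 : i.1 ≠ 0) :
    ∃ h : i.1 + 1 < n, x i < x ⟨i.1 + 1, h⟩ := by
  have : i ∈ Ascbot n x := by rw [hras.2]; exact hnub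
  rcases this with h | h
  · exact absurd h h0
  · exact h

lemma w_old_desc {i : Fin n} (h2 : i.1 + 1 < n) (hold : i ∉ Nub n x) :
    x ⟨i.1 + 1, h2⟩ ≤ x i := by
  have : i ∉ Ascbot n x := by rw [hras.2]; exact hold
  simp only [Ascbot, Set.mem_setOf_eq, not_or, not_exists, not_lt] at this
  exact this.2 h2

lemma w_x0 (h0 : 0 < n) : x ⟨0, h0⟩ = maxVal n x := by
  classical
  have : Nonempty (Fin n) := ⟨⟨0, h0⟩⟩
  have hex : ∃ i, x i = maxVal n x := by
    obtain ⟨b, _, hb⟩ := Finset.exists_mem_eq_sup Finset.univ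
      Finset.univ_nonempty x
    exact ⟨b, hb.symm⟩
  obtain ⟨p, hp, hpf⟩ := exists_first hex
  by_cases hp0 : p.1 = 0
  · have : p = ⟨0, h0⟩ := Fin.ext hp0
    rwa [this] at hp
  · have hnub : p ∈ Nub n x := by
      intro j hj
      rw [hp]
      exact fun hc => hpf j hj hc
    obtain ⟨h, hlt⟩ := w_nub_asc hras hnub hp0
    rw [hp] at hlt
    exact absurd hlt (not_lt.2 (w_le _))

include hav in
lemma w_312 {j k : Fin n} (h0 : 0 < j.1) (hjk : j < k) (hlt : x j < x k) :
    x k = maxVal n x := by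
  by_contra hne
  have h0n : 0 < n := lt_of_le_of_lt (Nat.zero_le _) j.2
  apply hav
  refine ⟨⟨0, h0n⟩, j, k, ?_, hjk, hlt, ?_⟩
  · simp [Fin.lt_def]; omega
  · rw [w_x0 hras h0n]
    exact lt_of_le_of_ne (w_le _) hne

include hav in
lemma w_desc {j k : Fin n} (h0 : 0 < j.1) (hjk : j < k) (hk : x k < maxVal n x) :
    x k ≤ x j := by
  by_contra h
  exact absurd (w_312 hras hav h0 hjk (not_le.1 h)) (Nat.ne_of_lt hk)

include hav in
lemma w_new_lt {i : Fin n} (hnub : i ∈ Nub n x) (h0 : 0 < i.1) :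
    ∀ j, j < i → x i < x j := by
  have h0n : 0 < n := lt_of_le_of_lt (Nat.zero_le _) i.2
  have hxm : x i < maxVal n x := by
    have h1 : x i ≠ x ⟨0, h0n⟩ := by
      have : (⟨0, h0n⟩ : Fin n) < i := by simp [Fin.lt_def]; omega
      exact fun hc => hnub ⟨0, h0n⟩ this hc.symm
    rw [w_x0 hras h0n] at h1
    exact lt_of_le_of_ne (w_le _) h1
  intro j hj
  by_cases hj0 : j.1 = 0
  · have : j = ⟨0, h0n⟩ := Fin.ext hj0
    rw [this, w_x0 hras h0n]
    exact hxm
  · have := w_desc hras hav (Nat.pos_of_ne_zero hj0) hj hxm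
    exact lt_of_le_of_ne this (fun hc => hnub j hj hc.symm)

lemma w_last_old (hn : 2 ≤ n) : (⟨n - 1, by omega⟩ : Fin n) ∉ Nub n x := by
  intro hnub
  obtain ⟨h, _⟩ := w_nub_asc hras hnub (by simp; omega)
  simp at h
  omega

include hav in
lemma w_new_succ {i : Fin n} (hnub : i ∈ Nub n x) (h0 : 0 < i.1) :
    ∃ h : i.1 + 1 < n, x ⟨i.1 + 1, h⟩ = maxVal n x := by
  obtain ⟨h, hlt⟩ := w_nub_asc hras hnub (by omega)
  refine ⟨h, ?_⟩
  by_contra hne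
  have := w_312 hras hav h0 (show i < ⟨i.1 + 1, h⟩ by simp [Fin.lt_def]) hlt
  exact hne this


instance {x : Fin n → ℕ} : DecidablePred (newAt x) := fun i => by
  unfold newAt; infer_instance

include hav in
lemma w_card {i : Fin n} (hxi : x i < maxVal n x) :
    (Finset.univ.filter (fun j : Fin n => 0 < j.1 ∧ j ≤ i ∧ newAt x j)).card
      = maxVal n x - x i := by
  classical
  have h0n : 0 < n := lt_of_le_of_lt (Nat.zero_le _) i.2
  set m := maxVal n x with hm
  have hbij : (Finset.univ.filter (fun j : Fin n => 0 < j.1 ∧ j ≤ i ∧ newAt x j)).card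
      = (Finset.Icc (x i) (m - 1)).card := by
    apply Finset.card_bij (fun j _ => x j)
    · intro j hj
      simp only [Finset.mem_filter, Finset.mem_univ, true_and] at hj
      obtain ⟨h0, hle, hnew⟩ := hj
      rw [Finset.mem_Icc]
      constructor
      · rcases eq_or_lt_of_le hle with rfl | hlt
        · exact le_rfl
        · exact w_desc hras hav h0 hlt hxi
      · have : x j < x ⟨0, h0n⟩ := w_new_lt hras hav hnew h0 ⟨0, h0n⟩
          (by simp [Fin.lt_def]; omega)
        rw [w_x0 hras h0n] at this
        omega
    · intro a ha b hb he
      simp only [Finset.mem_filter, Finset.mem_univ, true_and] at ha hb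
      rcases lt_trichotomy a b with h | h | h
      · exact absurd he.symm (Nat.ne_of_lt (w_new_lt hras hav hb.2.2 hb.1 a h))
      · exact h
      · exact absurd he (Nat.ne_of_lt (w_new_lt hras hav ha.2.2 ha.1 b h))
    · intro c hc
      rw [Finset.mem_Icc] at hc
      have hc1 : 1 ≤ c := le_trans (w_pos hras i) hc.1
      have hcm : c < m := by
        have := w_pos hras i
        omega
      obtain ⟨r, hr⟩ := hras.1.2 c hc1 (le_of_lt hcm)
      obtain ⟨p, hp, hpf⟩ := exists_first (P := fun j => x j = c) ⟨r, hr⟩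
      have hnew : newAt x p := by
        intro s hs hc'
        exact hpf s hs (by rw [hc', hp])
      have h0 : 0 < p.1 := by
        rcases Nat.eq_zero_or_pos p.1 with h | h
        · have : p = ⟨0, h0n⟩ := Fin.ext h
          rw [this, w_x0 hras h0n] at hp
          omega
        · exact h
      have hpi : p ≤ i := by
        by_contra hgt
        have hip : i < p := not_le.1 hgt
        obtain ⟨q, hq, hqf⟩ := exists_first (P := fun r => x r = x i) ⟨i, rfl⟩
        have hqi : q ≤ i := by
          by_contra hgt'
          exact hqf i (not_le.1 hgt') rfl
        have := w_new_lt hras hav hnew h0 q (lt_of_le_of_lt hqi hip)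
        rw [hp, hq] at this
        omega
      refine ⟨p, ?_, hp⟩
      simp only [Finset.mem_filter, Finset.mem_univ, true_and]
      exact ⟨h0, hpi, hnew⟩
  rw [hbij, Nat.card_Icc]
  have := w_pos hras i
  omega

include hav in
lemma w_total (h0n : 0 < n) :
    (Finset.univ.filter (fun j : Fin n => 0 < j.1 ∧ newAt x j)).card
      = maxVal n x - 1 := by
  classical
  set m := maxVal n x with hm
  have hbij : (Finset.univ.filter (fun j : Fin n => 0 < j.1 ∧ newAt x j)).card
      = (Finset.Icc 1 (m - 1)).card := by
    apply Finset.card_bij (fun j _ => x j)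
    · intro j hj
      simp only [Finset.mem_filter, Finset.mem_univ, true_and] at hj
      obtain ⟨h0, hnew⟩ := hj
      rw [Finset.mem_Icc]
      refine ⟨w_pos hras j, ?_⟩
      have : x j < x ⟨0, h0n⟩ := w_new_lt hras hav hnew h0 ⟨0, h0n⟩
        (by simp [Fin.lt_def]; omega)
      rw [w_x0 hras h0n] at this
      omega
    · intro a ha b hb he
      simp only [Finset.mem_filter, Finset.mem_univ, true_and] at ha hb
      rcases lt_trichotomy a b with h | h | h
      · exact absurd he.symm (Nat.ne_of_lt (w_new_lt hras hav hb.2 hb.1 a h))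
      · exact h
      · exact absurd he (Nat.ne_of_lt (w_new_lt hras hav ha.2 ha.1 b h))
    · intro c hc
      rw [Finset.mem_Icc] at hc
      have hm1 : 1 ≤ m := by
        have := w_pos hras ⟨0, h0n⟩
        have := w_le (x := x) ⟨0, h0n⟩
        omega
      obtain ⟨r, hr⟩ := hras.1.2 c hc.1 (by omega)
      obtain ⟨p, hp, hpf⟩ := exists_first (P := fun j => x j = c) ⟨r, hr⟩
      have hnew : newAt x p := fun s hs hc' => hpf s hs (by rw [hc', hp])
      have h0 : 0 < p.1 := by
        rcases Nat.eq_zero_or_pos p.1 with h | h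
        · have : p = ⟨0, h0n⟩ := Fin.ext h
          rw [this, w_x0 hras h0n] at hp
          omega
        · exact h
      refine ⟨p, ?_, hp⟩
      simp only [Finset.mem_filter, Finset.mem_univ, true_and]
      exact ⟨h0, hnew⟩
  rw [hbij, Nat.card_Icc]
  have hm1 : 1 ≤ m := le_trans (w_pos hras ⟨0, h0n⟩) (w_le _)
  omega

/-- the encoder: indicator of the maximum -/
def encB (x : Fin n → ℕ) : Fin n → Bool := fun i => decide (x i = maxVal n x)

include hav in
lemma e_vcond (hn : 2 ≤ n) : vcond n (encB x) := by
  constructor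
  · intro h
    simp [encB, w_x0 hras h]
  · intro i hif hall
    have hxi : x i ≠ maxVal n x := by simpa [encB] using hif
    have h0 : 0 < i.1 := by
      rcases Nat.eq_zero_or_pos i.1 with h | h
      · have h0n : 0 < n := lt_of_le_of_lt (Nat.zero_le _) i.2
        have : i = ⟨0, h0n⟩ := Fin.ext h
        rw [this, w_x0 hras h0n] at hxi
        simp at hxi
      · exact h
    have hnew : newAt x i := by
      intro j hj
      have := hall j hj
      simp only [encB, decide_eq_true_eq] at this
      rw [this]
      exact fun hc => hxi hc.symm
    obtain ⟨h, hs⟩ := w_new_succ hras hav hnew h0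
    unfold nxt
    rw [dif_pos h]
    simp [encB, hs]

include hav in
lemma e_Rset : Rset (encB x) = Finset.univ.filter (fun j : Fin n => 0 < j.1 ∧ newAt x j) := by
  ext j
  rw [mem_Rset]
  simp only [Finset.mem_filter, Finset.mem_univ, true_and]
  constructor
  · intro hr
    have hjf : encB x j = false := rise_false hr
    have hxj : x j ≠ maxVal n x := by simpa [encB] using hjf
    obtain ⟨h, hs⟩ := nxt_def (rise_nxt hr)
    have hsm : x ⟨j.1 + 1, h⟩ = maxVal n x := by simpa [encB] using hs
    have h0 : 0 < j.1 := by
      rcases Nat.eq_zero_or_pos j.1 with h' | h'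
      · have h0n : 0 < n := lt_of_le_of_lt (Nat.zero_le _) j.2
        have : j = ⟨0, h0n⟩ := Fin.ext h'
        rw [this, w_x0 hras h0n] at hxj
        simp at hxj
      · exact h'
    refine ⟨h0, ?_⟩
    by_contra hnot
    have hold : j ∉ Nub n x := hnot
    have := w_old_desc hras h hold
    rw [hsm] at this
    exact hxj (le_antisymm (w_le j) this)
  · rintro ⟨h0, hnew⟩
    have h0n : 0 < n := lt_of_le_of_lt (Nat.zero_le _) j.2
    have hxj : x j < maxVal n x := by
      have := w_new_lt hras hav hnew h0 ⟨0, h0n⟩ (by simp [Fin.lt_def]; omega)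
      rwa [w_x0 hras h0n] at this
    have hjf : encB x j = false := by simp [encB]; omega
    obtain ⟨h, hs⟩ := w_new_succ hras hav hnew h0
    have : nxt (encB x) j = true := by
      unfold nxt
      rw [dif_pos h]
      simp [encB, hs]
    simp [riseB, hjf, this]

include hav in
lemma e_m (h0n : 0 < n) : mOf (encB x) = maxVal n x := by
  have hm1 : 1 ≤ maxVal n x := le_trans (w_pos hras ⟨0, h0n⟩) (w_le _)
  unfold mOf
  rw [e_Rset hras hav, w_total hras hav h0n]
  omega

include hav in
lemma e_dec (hn : 2 ≤ n) : dec (encB x) = x := by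
  have h0n : 0 < n := by omega
  funext i
  by_cases hvi : x i = maxVal n x
  · have : encB x i = true := by simp [encB, hvi]
    rw [dec_true this, e_m hras hav h0n, hvi]
  · have hxi : x i < maxVal n x := lt_of_le_of_ne (w_le i) hvi
    have hif : encB x i = false := by simp [encB, hvi]
    have hdec : dec (encB x) i
        = mOf (encB x) - (Rcnt (encB x) i + (if nxt (encB x) i then 1 else 0)) := by
      unfold dec; simp [hif]
    have hRcnt : Rcnt (encB x) i
        = (Finset.univ.filter (fun j : Fin n => (0 < j.1 ∧ newAt x j) ∧ j < i)).card := by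
      unfold Rcnt
      rw [e_Rset hras hav, Finset.filter_filter]
    by_cases hni : newAt x i
    · have h0 : 0 < i.1 := by
        rcases Nat.eq_zero_or_pos i.1 with h | h
        · have : i = ⟨0, h0n⟩ := Fin.ext h
          rw [this, w_x0 hras h0n] at hvi
          simp at hvi
        · exact h
      have hnxt : nxt (encB x) i = true := by
        obtain ⟨h, hs⟩ := w_new_succ hras hav hni h0
        unfold nxt
        rw [dif_pos h]
        simp [encB, hs]
      have hkey : Finset.univ.filter (fun j : Fin n => 0 < j.1 ∧ j ≤ i ∧ newAt x j)
          = insert i (Finset.univ.filter (fun j : Fin n => (0 < j.1 ∧ newAt x j) ∧ j < i)) := by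
        ext j
        simp only [Finset.mem_filter, Finset.mem_univ, true_and, Finset.mem_insert]
        constructor
        · rintro ⟨a, b, c⟩
          rcases eq_or_lt_of_le b with rfl | hlt
          · exact Or.inl rfl
          · exact Or.inr ⟨⟨a, c⟩, hlt⟩
        · rintro (rfl | ⟨⟨a, c⟩, hlt⟩)
          · exact ⟨h0, le_rfl, hni⟩
          · exact ⟨a, le_of_lt hlt, c⟩
      have hc := w_card hras hav hxi
      rw [hkey, Finset.card_insert_of_notMem (by simp)] at hc
      rw [hdec, e_m hras hav h0n, hRcnt, hnxt, if_pos rfl]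
      omega
    · have hnxt : nxt (encB x) i = false := by
        unfold nxt
        split
        · rename_i h
          have := w_old_desc hras h hni
          simp only [encB, decide_eq_false_iff_not]
          omega
        · rfl
      have hkey : Finset.univ.filter (fun j : Fin n => 0 < j.1 ∧ j ≤ i ∧ newAt x j)
          = Finset.univ.filter (fun j : Fin n => (0 < j.1 ∧ newAt x j) ∧ j < i) := by
        ext j
        simp only [Finset.mem_filter, Finset.mem_univ, true_and]
        constructor
        · rintro ⟨a, b, c⟩
          rcases eq_or_lt_of_le b with rfl | hlt
          · exact absurd c hni
          · exact ⟨⟨a, c⟩, hlt⟩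
        · rintro ⟨⟨a, c⟩, hlt⟩
          exact ⟨a, le_of_lt hlt, c⟩
      have hc := w_card hras hav hxi
      rw [hkey] at hc
      rw [hdec, e_m hras hav h0n, hRcnt, hnxt]
      simp only [Bool.false_eq_true, if_false, add_zero]
      omega

end Encode

section Count

lemma mem_Vfin {v : Fin n → Bool} : v ∈ Vfin n ↔ vcond n v := by
  simp [Vfin]

/-- the all-true vector -/
def allT (n : ℕ) : Fin n → Bool := fun _ => true

/-- the special vector: true except at position n-1 (in `Fin (n+1)`) -/
def spec (n : ℕ) : Fin (n + 1) → Bool := fun i => decide (i.1 ≠ n - 1)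

lemma allT_mem : allT n ∈ Vfin n := by
  rw [mem_Vfin]
  exact ⟨fun _ => rfl, fun i hif _ => by simp [allT] at hif⟩

lemma spec_mem (hn : 2 ≤ n) : spec n ∈ Vfin (n + 1) := by
  rw [mem_Vfin]
  constructor
  · intro h
    simp [spec]
    omega
  · intro i hif _
    have hi : i.1 = n - 1 := by
      by_contra h
      simp [spec, h] at hif
    have h2 : i.1 + 1 < n + 1 := by omega
    unfold nxt
    rw [dif_pos h2]
    simp [spec]
    omega

lemma snoc_mem {u : Fin n → Bool} {b : Bool} (hu : vcond n u)
    (hne : ¬(u = allT n ∧ b = false)) (hn : 0 < n) : vcond (n + 1) (Fin.snoc u b) := by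
  constructor
  · intro _
    have h0 : ((⟨0, Nat.succ_pos n⟩ : Fin (n + 1))) = Fin.castSucc ⟨0, hn⟩ := Fin.ext rfl
    rw [h0, Fin.snoc_castSucc]
    exact hu.1 hn
  · intro i hif hall
    by_cases hi : i.1 < n
    · set i' : Fin n := ⟨i.1, hi⟩ with hi'
      have hcast : i = Fin.castSucc i' := Fin.ext rfl
      rw [hcast, Fin.snoc_castSucc] at hif
      have hall' : ∀ j : Fin n, j < i' → u j = true := by
        intro j hj
        have h1 : Fin.castSucc j < i := by
          rw [hcast]
          exact Fin.castSucc_lt_castSucc_iff.2 hj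
        have := hall (Fin.castSucc j) h1
        rwa [Fin.snoc_castSucc] at this
      obtain ⟨h2, hval⟩ := nxt_def (hu.2 i' hif hall')
      unfold nxt
      rw [dif_pos (by omega : i.1 + 1 < n + 1)]
      have hcast2 : (⟨i.1 + 1, by omega⟩ : Fin (n + 1)) = Fin.castSucc ⟨i.1 + 1, h2⟩ :=
        Fin.ext rfl
      rw [hcast2, Fin.snoc_castSucc]
      exact hval
    · have hlast : i = Fin.last n := Fin.ext (by have := i.2; simp [Fin.last]; omega)
      rw [hlast, Fin.snoc_last] at hif
      have hall'' : u = allT n := by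
        funext j
        have h1 : Fin.castSucc j < i := by
          rw [hlast]
          exact Fin.castSucc_lt_last j
        have := hall (Fin.castSucc j) h1
        rwa [Fin.snoc_castSucc] at this
      exact absurd ⟨hall'', hif⟩ hne

lemma init_mem {v : Fin (n + 1) → Bool} (hv : vcond (n + 1) v) (hne : v ≠ spec n)
    (hn : 0 < n) : vcond n (Fin.init v) := by
  constructor
  · intro _
    have h0 : Fin.castSucc (⟨0, hn⟩ : Fin n) = ⟨0, Nat.succ_pos n⟩ := Fin.ext rfl
    show v (Fin.castSucc ⟨0, hn⟩) = true
    rw [h0]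
    exact hv.1 (Nat.succ_pos n)
  · intro i hif hall
    have hif' : v (Fin.castSucc i) = false := hif
    have hall' : ∀ j : Fin (n + 1), j < Fin.castSucc i → v j = true := by
      intro j hj
      have hjn : j.1 < n := lt_of_lt_of_le (Fin.lt_def.1 hj) (by have := i.2; omega)
      have hcast : j = Fin.castSucc ⟨j.1, hjn⟩ := Fin.ext rfl
      rw [hcast]
      exact hall ⟨j.1, hjn⟩ (by rw [Fin.lt_def] at hj ⊢; exact hj)
    obtain ⟨h2, hval⟩ := nxt_def (hv.2 (Fin.castSucc i) hif' hall')
    simp only [Fin.coe_castSucc] at h2 hval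
    have hin : i.1 + 1 < n := by
      rcases lt_or_ge (i.1 + 1) n with h | h
      · exact h
      · exfalso
        have hieq : i.1 = n - 1 := by have := i.2; omega
        apply hne
        funext j
        rcases lt_trichotomy j.1 (n - 1) with hlt | heq | hgt
        · have : v j = true := hall' j (by rw [Fin.lt_def]; simp [Fin.castSucc]; omega)
          rw [this]
          simp [spec]
          omega
        · have hje : j = Fin.castSucc i := Fin.ext (by simp [Fin.castSucc]; omega)
          rw [hje, hif']
          simp [spec]
          omega
        · have hje : j = ⟨i.1 + 1, h2⟩ := Fin.ext (by have := j.2; simp; omega)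
          rw [hje, hval]
          simp [spec]
          omega
    unfold nxt
    rw [dif_pos hin]
    show v (Fin.castSucc ⟨i.1 + 1, hin⟩) = true
    have : Fin.castSucc (⟨i.1 + 1, hin⟩ : Fin n) = ⟨i.1 + 1, h2⟩ := Fin.ext rfl
    rw [this]
    exact hval

lemma card_step (hn : 2 ≤ n) : (Vfin (n + 1)).card = 2 * (Vfin n).card := by
  classical
  have key : (Vfin (n + 1)).card = ((Vfin n) ×ˢ (Finset.univ : Finset Bool)).card := by
    apply Finset.card_bij'
      (i := fun v _ => if v = spec n then (allT n, false) else (Fin.init v, v (Fin.last n)))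
      (j := fun p _ => if p.1 = allT n ∧ p.2 = false then spec n else Fin.snoc p.1 p.2)
    · intro v hv
      split
      · exact Finset.mem_product.2 ⟨allT_mem, Finset.mem_univ _⟩
      · rename_i hne
        exact Finset.mem_product.2
          ⟨mem_Vfin.2 (init_mem (mem_Vfin.1 hv) hne (by omega)), Finset.mem_univ _⟩
    · intro p hp
      split
      · exact spec_mem hn
      · rename_i hne
        have hu : p.1 ∈ Vfin n := (Finset.mem_product.1 hp).1
        exact mem_Vfin.2 (snoc_mem (mem_Vfin.1 hu) hne (by omega))
    · intro v hv
      by_cases hs : v = spec n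
      · rw [if_pos hs]
        simp only [and_self, if_pos]
        exact hs.symm
      · rw [if_neg hs]
        have hcond : ¬(Fin.init v = allT n ∧ v (Fin.last n) = false) := by
          rintro ⟨h1, h2⟩
          have hveq : v = Fin.snoc (allT n) false := by
            rw [← h1, ← h2, Fin.snoc_init_self]
          have hvc := mem_Vfin.1 hv
          have hlf : v (Fin.last n) = false := h2
          have hallb : ∀ j : Fin (n + 1), j < Fin.last n → v j = true := by
            intro j hj
            have hjn : j.1 < n := Fin.lt_def.1 hj
            have : j = Fin.castSucc ⟨j.1, hjn⟩ := Fin.ext rfl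
            rw [this, hveq, Fin.snoc_castSucc]
            rfl
          have := hvc.2 (Fin.last n) hlf hallb
          unfold nxt at this
          rw [dif_neg (by simp [Fin.last])] at this
          simp at this
        rw [if_neg hcond, Fin.snoc_init_self]
    · intro p hp
      by_cases hb : p.1 = allT n ∧ p.2 = false
      · rw [if_pos hb]
        rw [if_pos rfl]
        exact Prod.ext hb.1.symm hb.2.symm
      · rw [if_neg hb]
        have hns : Fin.snoc p.1 p.2 ≠ spec n := by
          intro he
          have hu : p.1 ∈ Vfin n := (Finset.mem_product.1 hp).1
          have hvc := mem_Vfin.1 hu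
          have hn1 : n - 1 < n := by omega
          have hval : p.1 ⟨n - 1, hn1⟩ = false := by
            have h1 : Fin.init (Fin.snoc p.1 p.2 : Fin (n + 1) → Bool) = p.1 := by simp
            have h2 : Fin.init (spec n) ⟨n - 1, hn1⟩ = false := by
              show spec n (Fin.castSucc ⟨n - 1, hn1⟩) = false
              simp [spec, Fin.castSucc]
            rw [← h1, he]
            exact h2
          have hallb : ∀ j : Fin n, j < ⟨n - 1, hn1⟩ → p.1 j = true := by
            intro j hj
            have h1 : Fin.init (Fin.snoc p.1 p.2 : Fin (n + 1) → Bool) = p.1 := by simp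
            have h2 : Fin.init (spec n) j = true := by
              show spec n (Fin.castSucc j) = true
              have := Fin.lt_def.1 hj
              simp [spec, Fin.castSucc]
              omega
            rw [← h1, he]
            exact h2
          have := hvc.2 ⟨n - 1, hn1⟩ hval hallb
          unfold nxt at this
          rw [dif_neg (by simp; omega)] at this
          simp at this
        rw [if_neg hns]
        exact Prod.ext (by simp) (by simp)
  rw [key, Finset.card_product]
  simp [mul_comm]

lemma card_V2 : (Vfin 2).card = 1 := by
  classical
  rw [Finset.card_eq_one]
  refine ⟨allT 2, ?_⟩
  ext v
  simp only [Finset.mem_singleton]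
  constructor
  · intro hv
    have hvc := mem_Vfin.1 hv
    funext i
    have h0 : v ⟨0, by omega⟩ = true := hvc.1 (by omega)
    have h1 : v ⟨1, by omega⟩ = true := by
      by_contra h
      have hf : v ⟨1, by omega⟩ = false := by revert h; cases v ⟨1, by omega⟩ <;> simp
      have hall : ∀ j : Fin 2, j < ⟨1, by omega⟩ → v j = true := by
        intro j hj
        have hj' : j.1 < 1 := hj
        have : j = ⟨0, by omega⟩ := Fin.ext (by show j.1 = 0; omega)
        rw [this]; exact h0
      have := hvc.2 ⟨1, by omega⟩ hf hall
      unfold nxt at this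
      rw [dif_neg (by decide)] at this
      simp at this
    have : i = ⟨0, by omega⟩ ∨ i = ⟨1, by omega⟩ := by
      rcases i with ⟨iv, hiv⟩
      interval_cases iv
      · exact Or.inl rfl
      · exact Or.inr rfl
    rcases this with rfl | rfl
    · rw [h0]; rfl
    · rw [h1]; rfl
  · rintro rfl
    exact allT_mem

lemma card_Vfin : ∀ n, 2 ≤ n → (Vfin n).card = 2 ^ (n - 2) := by
  intro n hn
  induction n, hn using Nat.le_induction with
  | base => simpa using card_V2
  | succ n hn ih =>
    rw [card_step hn, ih]
    have h1 : n + 1 - 2 = (n - 2) + 1 := by omega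
    rw [h1, pow_succ]
    ring

end Count

end Aux

theorem stmt8 (n : ℕ) (hn : 2 ≤ n) :
    {x : Fin n → ℕ | IsRAS n x ∧ Avoids312 n x}.ncard = 2 ^ (n - 2) := by
  classical
  have h0 : 0 < n := by omega
  have hset : {x : Fin n → ℕ | IsRAS n x ∧ Avoids312 n x}
      = ↑((Aux.Vfin n).image (Aux.dec)) := by
    ext x
    simp only [Set.mem_setOf_eq, Finset.coe_image, Set.mem_image, Finset.mem_coe]
    constructor
    · rintro ⟨h1, h2⟩
      exact ⟨Aux.encB x, Aux.mem_Vfin.2 (Aux.e_vcond h1 h2 hn), Aux.e_dec h1 h2 hn⟩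
    · rintro ⟨v, hv, rfl⟩
      have hvc := Aux.mem_Vfin.1 hv
      exact ⟨Aux.dec_isRAS hvc h0, Aux.dec_avoid⟩
  rw [hset, Set.ncard_coe_finset]
  have hinj : Set.InjOn Aux.dec ((Aux.Vfin n : Finset (Fin n → Bool)) : Set (Fin n → Bool)) := by
    intro v hv v' hv' he
    have hvc := Aux.mem_Vfin.1 (Finset.mem_coe.1 hv)
    have hvc' := Aux.mem_Vfin.1 (Finset.mem_coe.1 hv')
    have hm : Aux.mOf v = Aux.mOf v' := by
      rw [← Aux.dec_max hvc h0, ← Aux.dec_max hvc' h0, he]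
    funext i
    have h1 := Aux.dec_eq_max_iff hvc (i := i)
    have h2 := Aux.dec_eq_max_iff hvc' (i := i)
    rw [he, hm] at h1
    have : v i = true ↔ v' i = true := h1.symm.trans h2
    cases hvi : v i <;> cases hvi' : v' i <;> simp_all
  rw [Finset.card_image_of_injOn hinj, Aux.card_Vfin n hn]
end

section
/- For every n ≥ 2, the number of revised ascent sequences of length n avoiding the pattern 122 equals 2^{n−2}. -/
/-- `x` avoids the pattern `122`. -/
def Avoids122 (n : ℕ) (x : Fin n → ℕ) : Prop :=
  ¬ ∃ i j k : Fin n, i < j ∧ j < k ∧ x i < x j ∧ x j = x k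
def Sset (n : ℕ) : Set (Fin n → ℕ) := {x | IsRAS n x ∧ Avoids122 n x}

def insF (n s : ℕ) (y : Fin s → ℕ) : Fin n → ℕ := fun i =>
  if h : (i : ℕ) < s then y ⟨i, h⟩ + (n - 1 - s) else (i : ℕ) - s + 1

def F1prop (n : ℕ) (x : Fin n → ℕ) : Prop :=
  ∀ u : ℕ, 2 ≤ u → (∃ i, x i = u) → ∃ a o : Fin n, a < o ∧ x o = u ∧ x a < u

lemma xcongr {n : ℕ} (x : Fin n → ℕ) {a b : ℕ} (ha : a < n) (hb : b < n) (h : a = b) :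
    x ⟨a, ha⟩ = x ⟨b, hb⟩ := by subst h; rfl

lemma xeta {n : ℕ} (x : Fin n → ℕ) (i : Fin n) : x i = x ⟨(i : ℕ), i.2⟩ :=
  (congrArg x (Fin.eta i i.2)).symm

lemma ascbot_iff_nub {n : ℕ} {x : Fin n → ℕ} (hNA : Ascbot n x = Nub n x) (i : Fin n) :
    (i.1 = 0 ∨ ∃ h : i.1 + 1 < n, x i < x ⟨i.1 + 1, h⟩) ↔ ∀ j, j < i → x j ≠ x i := by
  have := Set.ext_iff.mp hNA i
  simpa [Ascbot, Nub] using this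

lemma ascbot_iff_nubN {n : ℕ} {x : Fin n → ℕ} (hNA : Ascbot n x = Nub n x) (t : ℕ) (ht : t < n) :
    (t = 0 ∨ ∃ h : t + 1 < n, x ⟨t, ht⟩ < x ⟨t + 1, h⟩) ↔
      ∀ (j : ℕ) (hj : j < n), j < t → x ⟨j, hj⟩ ≠ x ⟨t, ht⟩ := by
  have base := ascbot_iff_nub hNA ⟨t, ht⟩
  constructor
  · intro h j hj hjt
    exact base.mp h ⟨j, hj⟩ (Fin.mk_lt_mk.mpr hjt)
  · intro h
    refine base.mpr ?_
    intro j hj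
    rw [xeta x j]
    exact h (j : ℕ) j.2 (Fin.lt_def.mp hj)

lemma avoids122N {n : ℕ} {x : Fin n → ℕ} (hAv : Avoids122 n x) (a b c : ℕ)
    (ha : a < n) (hb : b < n) (hc : c < n) (hab : a < b) (hbc : b < c)
    (h1 : x ⟨a, ha⟩ < x ⟨b, hb⟩) (h2 : x ⟨b, hb⟩ = x ⟨c, hc⟩) : False :=
  hAv ⟨⟨a, ha⟩, ⟨b, hb⟩, ⟨c, hc⟩, Fin.mk_lt_mk.mpr hab, Fin.mk_lt_mk.mpr hbc, h1, h2⟩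

lemma mem_Sset (n : ℕ) (x : Fin n → ℕ)
    (hE : IsEndo n x) (hC : ∀ v, 1 ≤ v → v ≤ maxVal n x → ∃ i, x i = v)
    (hNA : Ascbot n x = Nub n x) (hAv : Avoids122 n x) : x ∈ Sset n :=
  ⟨⟨⟨hE, hC⟩, hNA⟩, hAv⟩

section InsMem
variable {n s : ℕ} {y : Fin s → ℕ}

lemma insF_preN (hsn : s < n) (t : ℕ) (ht : t < s) (hn' : t < n) :
    insF n s y ⟨t, hn'⟩ = y ⟨t, ht⟩ + (n - 1 - s) := dif_pos ht

lemma insF_tailN (t : ℕ) (hn' : t < n) (hst : s ≤ t) :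
    insF n s y ⟨t, hn'⟩ = t - s + 1 := dif_neg (show ¬ (t < s) by omega)

lemma ins_mem (hs1 : 1 ≤ s) (hsn : s < n) (hy : y ∈ Sset s) : insF n s y ∈ Sset n := by
  obtain ⟨⟨⟨hyE, hyC⟩, hyNA⟩, hyAv⟩ := hy
  have hy1 : ∀ j, 1 ≤ y j := fun j => (hyE j).1
  have hylem : ∀ j, y j ≤ maxVal s y := fun j => Finset.le_sup (Finset.mem_univ j)
  have hsne : (Finset.univ : Finset (Fin s)).Nonempty := ⟨⟨0, hs1⟩, Finset.mem_univ _⟩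
  obtain ⟨jm, -, hjm⟩ := Finset.exists_mem_eq_sup Finset.univ hsne y
  have hjm' : y jm = maxVal s y := hjm.symm
  have hmy1 : 1 ≤ maxVal s y := le_trans (hy1 jm) (le_of_eq hjm')
  have hmx : maxVal n (insF n s y) = maxVal s y + (n - 1 - s) := by
    apply le_antisymm
    · apply Finset.sup_le
      intro i _
      rw [xeta (insF n s y) i]
      by_cases h : (i : ℕ) < s
      · rw [insF_preN hsn _ h i.2]
        exact Nat.add_le_add_right (hylem _) _
      · rw [insF_tailN _ i.2 (by omega)]
        have := i.2
        omega
    · have hlt : (jm : ℕ) < n := lt_trans jm.2 hsn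
      have h1 : insF n s y ⟨(jm : ℕ), hlt⟩ = y ⟨(jm : ℕ), jm.2⟩ + (n - 1 - s) :=
        insF_preN hsn _ jm.2 hlt
      have h2 : y ⟨(jm : ℕ), jm.2⟩ = y jm := congrArg y (Fin.eta jm jm.2)
      calc maxVal s y + (n - 1 - s) = insF n s y ⟨(jm : ℕ), hlt⟩ := by rw [h1, h2, hjm']
        _ ≤ _ := Finset.le_sup (Finset.mem_univ _)
  obtain ⟨j1, hj1⟩ := hyC 1 le_rfl hmy1
  have hj1n : (j1 : ℕ) < n := lt_trans j1.2 hsn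
  have hxj1 : insF n s y ⟨(j1 : ℕ), hj1n⟩ = 1 + (n - 1 - s) := by
    rw [insF_preN hsn _ j1.2 hj1n, congrArg y (Fin.eta j1 j1.2), hj1]
  refine mem_Sset n _ ?_ ?_ ?_ ?_
  · -- IsEndo
    intro i
    rw [xeta (insF n s y) i]
    by_cases h : (i : ℕ) < s
    · rw [insF_preN hsn _ h i.2]
      have := (hyE ⟨i, h⟩).2
      have := hy1 ⟨i, h⟩
      omega
    · rw [insF_tailN _ i.2 (by omega)]
      have := i.2
      omega
  · -- Cayley
    intro v hv1 hvm
    rw [hmx] at hvm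
    by_cases hc : v ≤ n - s
    · have hb : s + v - 1 < n := by omega
      refine ⟨⟨s + v - 1, hb⟩, ?_⟩
      rw [insF_tailN _ hb (by omega)]
      omega
    · obtain ⟨j, hj⟩ := hyC (v - (n - 1 - s)) (by omega) (by omega)
      have hb : (j : ℕ) < n := lt_trans j.2 hsn
      refine ⟨⟨(j : ℕ), hb⟩, ?_⟩
      rw [insF_preN hsn _ j.2 hb, congrArg y (Fin.eta j j.2), hj]
      omega
  · -- Ascbot = Nub
    apply Set.ext
    rintro ⟨t, htn⟩
    simp only [Ascbot, Nub, Set.mem_setOf_eq]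
    show (t = 0 ∨ ∃ h : t + 1 < n, insF n s y ⟨t, htn⟩ < insF n s y ⟨t + 1, h⟩) ↔
      ∀ j, j < ⟨t, htn⟩ → insF n s y j ≠ insF n s y ⟨t, htn⟩
    by_cases h0 : t = 0
    · constructor
      · intro _ j hj
        have hjt : (j : ℕ) < t := hj
        omega
      · intro _; exact Or.inl h0
    by_cases hts : t < s
    · have hyiff := ascbot_iff_nubN hyNA t hts
      by_cases hc : t + 1 < s
      · constructor
        · rintro (h | ⟨h, hlt⟩)
          · exact absurd h h0
          · rw [insF_preN hsn t hts htn, insF_preN hsn (t+1) hc h] at hlt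
            have hynub := hyiff.mp (Or.inr ⟨hc, by omega⟩)
            intro j hj hne
            have hjt : (j : ℕ) < t := hj
            have hjs : (j : ℕ) < s := by omega
            rw [xeta (insF n s y) j, insF_preN hsn _ hjs j.2,
              insF_preN hsn t hts htn] at hne
            exact hynub (j : ℕ) hjs hjt (by omega)
        · intro hnub
          have hynub : ∀ (j : ℕ) (hj : j < s), j < t → y ⟨j, hj⟩ ≠ y ⟨t, hts⟩ := by
            intro j hj hjt hne
            have hjn : j < n := by omega
            refine hnub ⟨j, hjn⟩ (Fin.mk_lt_mk.mpr hjt) ?_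
            rw [insF_preN hsn _ hj hjn, insF_preN hsn t hts htn, hne]
          rcases hyiff.mpr hynub with h | ⟨hh, hlt⟩
          · exact absurd h h0
          · refine Or.inr ⟨by omega, ?_⟩
            rw [insF_preN hsn t hts htn, insF_preN hsn (t+1) hh (by omega)]
            omega
      · have hteq : t + 1 = s := by omega
        constructor
        · rintro (h | ⟨h, hlt⟩)
          · exact absurd h h0
          · exfalso
            rw [insF_preN hsn t hts htn, insF_tailN (t+1) h (by omega)] at hlt
            have := hy1 ⟨t, hts⟩
            omega
        · intro hnub
          exfalso
          have hfalse : ¬ (t = 0 ∨ ∃ hh : t + 1 < s, y ⟨t, hts⟩ < y ⟨t + 1, hh⟩) := by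
            rintro (h | ⟨hh, _⟩)
            · exact h0 h
            · omega
          have hnnub : ¬ ∀ (j : ℕ) (hj : j < s), j < t → y ⟨j, hj⟩ ≠ y ⟨t, hts⟩ :=
            fun hnub' => hfalse (hyiff.mpr hnub')
          push_neg at hnnub
          obtain ⟨j, hj, hjt, hje⟩ := hnnub
          have hjn : j < n := by omega
          refine hnub ⟨j, hjn⟩ (Fin.mk_lt_mk.mpr hjt) ?_
          rw [insF_preN hsn _ hj hjn, insF_preN hsn t hts htn, hje]
    · -- tail: s ≤ t
      have hst : s ≤ t := by omega
      by_cases hlast : t = n - 1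
      · constructor
        · rintro (h | ⟨h, _⟩)
          · exact absurd h h0
          · omega
        · intro hnub
          exfalso
          refine hnub ⟨(j1 : ℕ), hj1n⟩ (Fin.mk_lt_mk.mpr (by have := j1.2; omega)) ?_
          rw [hxj1, insF_tailN t htn hst]
          omega
      · have htn2 : t + 1 < n := by omega
        constructor
        · intro _
          intro j hj hne
          have hjt : (j : ℕ) < t := hj
          rw [insF_tailN t htn hst, xeta (insF n s y) j] at hne
          by_cases hjs : (j : ℕ) < s
          · rw [insF_preN hsn _ hjs j.2] at hne
            have := hy1 ⟨(j : ℕ), hjs⟩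
            omega
          · rw [insF_tailN _ j.2 (by omega)] at hne
            omega
        · intro _
          refine Or.inr ⟨htn2, ?_⟩
          rw [insF_tailN t htn hst, insF_tailN (t+1) htn2 (by omega)]
          omega
  · -- Avoids122
    rintro ⟨a, b, c, hab, hbc, h1, h2⟩
    have habn : (a : ℕ) < (b : ℕ) := hab
    have hbcn : (b : ℕ) < (c : ℕ) := hbc
    rw [xeta (insF n s y) a, xeta (insF n s y) b] at h1
    rw [xeta (insF n s y) b, xeta (insF n s y) c] at h2
    by_cases hcs : (c : ℕ) < s
    · have has : (a : ℕ) < s := by omega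
      have hbs : (b : ℕ) < s := by omega
      rw [insF_preN hsn _ has a.2, insF_preN hsn _ hbs b.2] at h1
      rw [insF_preN hsn _ hbs b.2, insF_preN hsn _ hcs c.2] at h2
      exact hyAv ⟨⟨(a:ℕ), has⟩, ⟨(b:ℕ), hbs⟩, ⟨(c:ℕ), hcs⟩,
        Fin.mk_lt_mk.mpr habn, Fin.mk_lt_mk.mpr hbcn, by omega, by omega⟩
    by_cases hclast : (c : ℕ) = n - 1
    · have hxc : insF n s y ⟨(c:ℕ), c.2⟩ = n - s := by
        rw [insF_tailN _ c.2 (by omega)]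
        omega
      by_cases hbs : (b : ℕ) < s
      · have has : (a : ℕ) < s := by omega
        rw [insF_preN hsn _ has a.2, insF_preN hsn _ hbs b.2] at h1
        rw [insF_preN hsn _ hbs b.2, hxc] at h2
        have := hy1 ⟨(a:ℕ), has⟩
        omega
      · rw [insF_tailN _ b.2 (by omega), hxc] at h2
        have := b.2
        omega
    · have hcs' : s ≤ (c : ℕ) := by omega
      have hcn2 : (c : ℕ) + 1 < n := by have := c.2; omega
      rw [insF_tailN _ c.2 hcs'] at h2
      by_cases hbs : (b : ℕ) < s
      · rw [insF_preN hsn _ hbs b.2] at h2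
        have := hy1 ⟨(b:ℕ), hbs⟩
        omega
      · rw [insF_tailN _ b.2 (by omega)] at h2
        omega

end InsMem

def rankv (P : Finset ℕ) (u : ℕ) : ℕ := (P.filter (fun w => w ≤ u)).card

section Rank

lemma rankv_le {P : Finset ℕ} {u w : ℕ} (h : u ≤ w) : rankv P u ≤ rankv P w := by
  apply Finset.card_le_card
  intro a ha
  simp only [Finset.mem_filter] at *
  exact ⟨ha.1, le_trans ha.2 h⟩

lemma rankv_lt {P : Finset ℕ} {u w : ℕ} (hw : w ∈ P) (h : u < w) :
    rankv P u < rankv P w := by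
  apply Finset.card_lt_card
  rw [Finset.ssubset_def]
  refine ⟨?_, ?_⟩
  · intro a ha
    simp only [Finset.mem_filter] at *
    exact ⟨ha.1, by omega⟩
  · intro hsub
    have := hsub (Finset.mem_filter.mpr ⟨hw, le_refl w⟩)
    simp only [Finset.mem_filter] at this
    omega

lemma rankv_pos {P : Finset ℕ} {u : ℕ} (hu : u ∈ P) : 1 ≤ rankv P u :=
  Finset.card_pos.mpr ⟨u, Finset.mem_filter.mpr ⟨hu, le_refl u⟩⟩

lemma rankv_le_card {P : Finset ℕ} {u : ℕ} : rankv P u ≤ P.card :=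
  Finset.card_le_card (Finset.filter_subset _ _)

lemma rankv_lt_iff {P : Finset ℕ} {u w : ℕ} (hu : u ∈ P) (hw : w ∈ P) :
    rankv P u < rankv P w ↔ u < w := by
  constructor
  · intro h
    by_contra hc
    exact absurd (rankv_le (P := P) (show w ≤ u by omega)) (by omega)
  · exact rankv_lt hw

lemma rankv_eq_iff {P : Finset ℕ} {u w : ℕ} (hu : u ∈ P) (hw : w ∈ P) :
    rankv P u = rankv P w ↔ u = w := by
  constructor
  · intro h
    rcases lt_trichotomy u w with hc | hc | hc
    · exact absurd (rankv_lt hw hc) (by omega)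
    · exact hc
    · exact absurd (rankv_lt hu hc) (by omega)
  · intro h; rw [h]

lemma rankv_surj {P : Finset ℕ} {w : ℕ} (h1 : 1 ≤ w) (h2 : w ≤ P.card) :
    ∃ u ∈ P, rankv P u = w := by
  have hmain := Finset.surj_on_of_inj_on_of_card_le (s := P) (t := Finset.Icc 1 P.card)
    (fun u _ => rankv P u)
    (fun u hu => Finset.mem_Icc.mpr ⟨rankv_pos hu, rankv_le_card⟩)
    (fun u₁ u₂ hu₁ hu₂ heq => (rankv_eq_iff hu₁ hu₂).mp heq)
    (by rw [Nat.card_Icc]; omega)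
  obtain ⟨u, hu, hequ⟩ := hmain w (Finset.mem_Icc.mpr ⟨h1, h2⟩)
  exact ⟨u, hu, hequ.symm⟩

lemma rankv_Icc {a b u : ℕ} (ha : 1 ≤ a) (hu : a ≤ u) (hub : u ≤ b) :
    rankv (Finset.Icc a b) u = u + 1 - a := by
  have : (Finset.Icc a b).filter (fun w => w ≤ u) = Finset.Icc a u := by
    ext w
    simp only [Finset.mem_filter, Finset.mem_Icc]
    omega
  rw [rankv, this, Nat.card_Icc]

end Rank

lemma decomp {n : ℕ} (hn : 2 ≤ n)
    (IH : ∀ s, s < n → ∀ y ∈ Sset s, F1prop s y)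
    {x : Fin n → ℕ} (hx : x ∈ Sset n) :
    ∃ s, 1 ≤ s ∧ s < n ∧ ∃ y ∈ Sset s, x = insF n s y := by
  classical
  obtain ⟨⟨⟨hE, hC⟩, hNA⟩, hAv⟩ := hx
  have h0n : 0 < n := by omega
  have hle : ∀ i, x i ≤ maxVal n x := fun i => Finset.le_sup (Finset.mem_univ i)
  -- first entry is the max
  have hx0 : x ⟨0, h0n⟩ = maxVal n x := by
    obtain ⟨b, -, hb⟩ := Finset.exists_mem_eq_sup Finset.univ
      ⟨⟨0, h0n⟩, Finset.mem_univ _⟩ x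
    have hFne : (Finset.univ.filter (fun j : Fin n => x j = maxVal n x)).Nonempty :=
      ⟨b, Finset.mem_filter.mpr ⟨Finset.mem_univ _, hb.symm⟩⟩
    set i0 := (Finset.univ.filter (fun j : Fin n => x j = maxVal n x)).min' hFne with hi0
    have hi0x : x i0 = maxVal n x :=
      (Finset.mem_filter.mp ((Finset.univ.filter _).min'_mem hFne)).2
    by_cases h00 : (i0 : ℕ) = 0
    · have : i0 = ⟨0, h0n⟩ := Fin.ext h00
      rw [← this]; exact hi0x
    · exfalso
      have hnub : ∀ j, j < i0 → x j ≠ x i0 := by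
        intro j hj hne
        have hjF : j ∈ Finset.univ.filter (fun j : Fin n => x j = maxVal n x) :=
          Finset.mem_filter.mpr ⟨Finset.mem_univ _, by rw [hne, hi0x]⟩
        have := (Finset.univ.filter (fun j : Fin n => x j = maxVal n x)).min'_le j hjF
        rw [← hi0] at this
        exact absurd this (not_le.mpr hj)
      rcases (ascbot_iff_nub hNA i0).mpr hnub with h | ⟨hh, hlt⟩
      · exact h00 h
      · have := hle ⟨(i0 : ℕ) + 1, hh⟩
        rw [hi0x] at hlt
        omega
  -- ℕ-valued version of x
  set X : ℕ → ℕ := fun t => if h : t < n then x ⟨t, h⟩ else 0 with hXd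
  have hXdef : ∀ (t : ℕ) (h : t < n), x ⟨t, h⟩ = X t := by
    intro t h
    simp only [hXd]
    rw [dif_pos h]
  have hX1 : ∀ t, t < n → 1 ≤ X t := fun t h => by
    rw [← hXdef t h]; exact (hE ⟨t, h⟩).1
  have hXle : ∀ t, t < n → X t ≤ maxVal n x := fun t h => by
    rw [← hXdef t h]; exact hle ⟨t, h⟩
  have hCX : ∀ u, 1 ≤ u → u ≤ maxVal n x → ∃ t, t < n ∧ X t = u := by
    intro u h1 h2
    obtain ⟨i, hi⟩ := hC u h1 h2
    refine ⟨(i : ℕ), i.2, ?_⟩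
    rw [← hXdef (i : ℕ) i.2, ← xeta x i]
    exact hi
  have hX0 : X 0 = maxVal n x := by rw [← hXdef 0 h0n]; exact hx0
  have hm1 : 1 ≤ maxVal n x := le_trans (hX1 0 h0n) (le_of_eq hX0)
  have hNubAscX : ∀ t, t < n → 1 ≤ t →
      ((∀ j, j < t → X j ≠ X t) ↔ (t + 1 < n ∧ X t < X (t + 1))) := by
    intro t ht ht1
    have base := ascbot_iff_nubN hNA t ht
    constructor
    · intro h
      have hxnub : ∀ (j : ℕ) (hj : j < n), j < t → x ⟨j, hj⟩ ≠ x ⟨t, ht⟩ := by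
        intro j hj hjt
        rw [hXdef j hj, hXdef t ht]
        exact h j hjt
      rcases base.mpr hxnub with h0 | ⟨hh, hlt⟩
      · omega
      · refine ⟨hh, ?_⟩
        rw [← hXdef t ht, ← hXdef (t + 1) hh]
        exact hlt
    · rintro ⟨hh, hlt⟩
      have hxasc : t = 0 ∨ ∃ h : t + 1 < n, x ⟨t, ht⟩ < x ⟨t + 1, h⟩ := by
        refine Or.inr ⟨hh, ?_⟩
        rw [hXdef t ht, hXdef (t + 1) hh]
        exact hlt
      intro j hjt
      have hjn : j < n := by omega
      have := base.mp hxasc j hjn hjt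
      rw [hXdef j hjn, hXdef t ht] at this
      exact this
  have hAvX : ∀ a b c : ℕ, a < b → b < c → c < n → X a < X b → X b = X c → False := by
    intro a b c hab hbc hc h1 h2
    have ha : a < n := by omega
    have hb : b < n := by omega
    rw [← hXdef a ha, ← hXdef b hb] at h1
    rw [← hXdef b hb, ← hXdef c hc] at h2
    exact avoids122N hAv a b c ha hb hc hab hbc h1 h2
  -- define s : start of the final ascent run
  set Q : ℕ → Prop := fun t => ∀ j, t ≤ j → j + 1 < n → X j < X (j + 1) with hQd
  have hQtop : Q (n - 1) := fun j hj hj1 => absurd hj1 (by omega)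
  have hQex : ∃ t, Q t := ⟨n - 1, hQtop⟩
  set s := Nat.find hQex with hsd
  have hQs : Q s := Nat.find_spec hQex
  have hsle : s ≤ n - 1 := Nat.find_le hQtop
  have hs1 : 1 ≤ s := by
    by_contra hcon
    have h01 := hQs 0 (by omega) (by omega)
    have h01' : X 0 < X 1 := h01
    have h1n := hXle 1 (by omega)
    omega
  have hdesc : ¬ X (s - 1) < X s := by
    have hmin := Nat.find_min hQex (show s - 1 < s by omega)
    simp only [hQd] at hmin
    push_neg at hmin
    obtain ⟨j, hj1, hj2, hj3⟩ := hmin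
    have hjeq : j = s - 1 := by
      by_contra hne
      have := hQs j (by omega) hj2
      omega
    subst hjeq
    have heq1 : s - 1 + 1 = s := by omega
    rw [heq1] at hj3
    omega
  -- last position is a repeat
  have hlastnotnub : ¬ ∀ j, j < n - 1 → X j ≠ X (n - 1) := by
    intro hcon
    have := (hNubAscX (n - 1) (by omega) (by omega)).mp hcon
    omega
  push_neg at hlastnotnub
  obtain ⟨j0, hj0lt, hj0eq⟩ := hlastnotnub
  -- the chain lemma
  have hchain : ∀ d a, s ≤ a → a + d ≤ n - 1 → X a + d ≤ X (a + d) := by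
    intro d
    induction d with
    | zero => intro a _ _; exact Nat.le.refl
    | succ d ih =>
      intro a ha hd
      have h1 := ih a ha (by omega)
      have h2 : X (a + d) < X (a + d + 1) := hQs (a + d) (by omega) (by omega)
      show X a + (d + 1) ≤ X (a + d + 1)
      omega
  set v := X (n - 1) with hvd
  have hvm : v ≤ maxVal n x := by rw [hvd]; exact hXle _ (by omega)
  have hv1 : 1 ≤ v := by rw [hvd]; exact hX1 _ (by omega)
  have htailv : ∀ j, s ≤ j → j < n - 1 → X j < v := by
    intro j hj hjn
    have := hchain (n - 1 - j) j hj (by omega)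
    have he : j + (n - 1 - j) = n - 1 := by omega
    rw [he] at this
    omega
  have hfv : ∃ j, j < s ∧ X j = v := by
    refine ⟨j0, ?_, hj0eq⟩
    by_contra hcon
    have := htailv j0 (by omega) hj0lt
    omega
  -- prefix compression
  set Pv : Finset ℕ := Finset.image (fun i : Fin s => X (i : ℕ)) Finset.univ with hPvd
  have hPvmem : ∀ u, u ∈ Pv ↔ ∃ j, j < s ∧ X j = u := by
    intro u
    rw [hPvd]
    simp only [Finset.mem_image, Finset.mem_univ, true_and]
    constructor
    · rintro ⟨i, rfl⟩; exact ⟨(i : ℕ), i.2, rfl⟩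
    · rintro ⟨j, hj, rfl⟩; exact ⟨⟨j, hj⟩, rfl⟩
  have hPvcard : Pv.card ≤ s := by
    rw [hPvd]
    exact le_trans Finset.card_image_le (by simp)
  set y : Fin s → ℕ := fun i => rankv Pv (X (i : ℕ)) with hyd
  have hymem : ∀ i : Fin s, X (i : ℕ) ∈ Pv := fun i => (hPvmem _).mpr ⟨(i : ℕ), i.2, rfl⟩
  have hy1 : ∀ i, 1 ≤ y i := fun i => rankv_pos (hymem i)
  have hyle : ∀ i, y i ≤ Pv.card := fun i => rankv_le_card
  have hylt_iff : ∀ i j : Fin s, y i < y j ↔ X (i : ℕ) < X (j : ℕ) :=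
    fun i j => rankv_lt_iff (hymem i) (hymem j)
  have hyeq_iff : ∀ i j : Fin s, y i = y j ↔ X (i : ℕ) = X (j : ℕ) :=
    fun i j => rankv_eq_iff (hymem i) (hymem j)
  have hPv1 : 1 ≤ Pv.card := by
    have := hy1 ⟨0, hs1⟩
    have := hyle ⟨0, hs1⟩
    omega
  have hmaxy : maxVal s y = Pv.card := by
    apply le_antisymm
    · exact Finset.sup_le (fun i _ => hyle i)
    · obtain ⟨u, hu, hru⟩ := rankv_surj (P := Pv) hPv1 le_rfl
      obtain ⟨j, hjs, hju⟩ := (hPvmem u).mp hu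
      have : y ⟨j, hjs⟩ = Pv.card := by rw [hyd]; simp only; rw [hju]; exact hru
      calc Pv.card = y ⟨j, hjs⟩ := this.symm
        _ ≤ _ := Finset.le_sup (Finset.mem_univ _)
  -- y is a valid sequence
  have hyS : y ∈ Sset s := by
    refine mem_Sset s y (fun i => ⟨hy1 i, le_trans (hyle i) hPvcard⟩) ?_ ?_ ?_
    · intro w h1 h2
      rw [hmaxy] at h2
      obtain ⟨u, hu, hru⟩ := rankv_surj (P := Pv) h1 h2
      obtain ⟨j, hjs, hju⟩ := (hPvmem u).mp hu
      refine ⟨⟨j, hjs⟩, ?_⟩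
      rw [hyd]; simp only; rw [hju]; exact hru
    · apply Set.ext
      rintro ⟨t, hts⟩
      simp only [Ascbot, Nub, Set.mem_setOf_eq]
      show (t = 0 ∨ ∃ h : t + 1 < s, y ⟨t, hts⟩ < y ⟨t + 1, h⟩) ↔
        ∀ j, j < ⟨t, hts⟩ → y j ≠ y ⟨t, hts⟩
      by_cases h0 : t = 0
      · constructor
        · intro _ j hj
          have : (j : ℕ) < t := hj
          omega
        · intro _; exact Or.inl h0
      · have htn : t < n := by omega
        have hXiff := hNubAscX t htn (by omega)
        have hyXnub : (∀ j, j < (⟨t, hts⟩ : Fin s) → y j ≠ y ⟨t, hts⟩) ↔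
            (∀ j, j < t → X j ≠ X t) := by
          constructor
          · intro h j hjt
            have hjs : j < s := by omega
            have := h ⟨j, hjs⟩ (Fin.mk_lt_mk.mpr hjt)
            intro hXeq
            exact this ((hyeq_iff ⟨j, hjs⟩ ⟨t, hts⟩).mpr hXeq)
          · intro h j hjt hyeq
            have hjt' : (j : ℕ) < t := hjt
            have := (hyeq_iff j ⟨t, hts⟩).mp hyeq
            exact h (j : ℕ) hjt' this
        by_cases hc : t + 1 < s
        · constructor
          · rintro (h | ⟨hh, hlt⟩)
            · exact absurd h h0
            · have hXlt : X t < X (t + 1) := (hylt_iff ⟨t, hts⟩ ⟨t + 1, hh⟩).mp hlt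
              exact hyXnub.mpr (hXiff.mpr ⟨by omega, hXlt⟩)
          · intro hnub
            have hXnub := hyXnub.mp hnub
            obtain ⟨-, hXlt⟩ := hXiff.mp hXnub
            exact Or.inr ⟨hc, (hylt_iff ⟨t, hts⟩ ⟨t + 1, hc⟩).mpr hXlt⟩
        · constructor
          · rintro (h | ⟨hh, _⟩)
            · exact absurd h h0
            · omega
          · intro hnub
            exfalso
            have hXnub := hyXnub.mp hnub
            obtain ⟨h1', hXlt⟩ := hXiff.mp hXnub
            have hts' : t = s - 1 := by omega
            rw [hts'] at hXlt
            rw [show s - 1 + 1 = s by omega] at hXlt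
            exact hdesc hXlt
    · rintro ⟨a, b, c, hab, hbc, h1, h2⟩
      have h1' : X (a : ℕ) < X (b : ℕ) := (hylt_iff a b).mp h1
      have h2' : X (b : ℕ) = X (c : ℕ) := (hyeq_iff b c).mp h2
      exact hAvX (a : ℕ) (b : ℕ) (c : ℕ) hab hbc (by have := c.2; omega) h1' h2'
  have hF1y := IH s (by omega) y hyS
  -- all prefix values are ≥ v
  have H1 : ∀ k, k < s → v ≤ X k := by
    by_contra hcon
    push_neg at hcon
    obtain ⟨k, hks, hkv⟩ := hcon
    obtain ⟨j0', hj0s, hj0v⟩ := hfv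
    have hylt : y ⟨k, hks⟩ < y ⟨j0', hj0s⟩ := by
      rw [hylt_iff]
      show X k < X j0'
      omega
    have hy2 : 2 ≤ y ⟨j0', hj0s⟩ := by have := hy1 ⟨k, hks⟩; omega
    obtain ⟨A, O, hAO, hOv, hAlt⟩ := hF1y (y ⟨j0', hj0s⟩) hy2 ⟨⟨j0', hj0s⟩, rfl⟩
    have hOx : X (O : ℕ) = X j0' := (hyeq_iff O ⟨j0', hj0s⟩).mp hOv
    have hAx : X (A : ℕ) < X (O : ℕ) := by
      rw [← hOv] at hAlt
      exact (hylt_iff A O).mp hAlt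
    refine hAvX (A : ℕ) (O : ℕ) (n - 1) hAO (by have := O.2; omega) (by omega) hAx ?_
    rw [hOx, hj0v, hvd]
  -- values on the tail
  have httail : ∀ d, d ≤ n - 1 - s → X (n - 1 - d) + d = v := by
    intro d
    induction d with
    | zero => intro _; exact hvd.symm
    | succ d ih =>
      intro hd
      have ihh := ih (by omega)
      have hstep : X (n - 1 - (d + 1)) < X (n - 1 - (d + 1) + 1) :=
        hQs (n - 1 - (d + 1)) (by omega) (by omega)
      rw [show n - 1 - (d + 1) + 1 = n - 1 - d by omega] at hstep
      by_contra hne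
      have hlt2 : X (n - 1 - (d + 1)) + (d + 1) < v := by omega
      obtain ⟨p, hpn, hpu⟩ := hCX (v - (d + 1))
        (by have := hX1 (n - 1 - (d + 1)) (by omega); omega) (by omega)
      by_cases hps : p < s
      · have := H1 p hps
        omega
      · by_cases hpt : p ≤ n - 1 - (d + 1)
        · have := hchain ((n - 1 - (d + 1)) - p) p (by omega) (by omega)
          rw [show p + ((n - 1 - (d + 1)) - p) = n - 1 - (d + 1) by omega] at this
          omega
        · have := hchain (p - (n - 1 - d)) (n - 1 - d) (by omega) (by omega)
          rw [show (n - 1 - d) + (p - (n - 1 - d)) = p by omega] at this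
          omega
  have htails : ∀ t, s ≤ t → t ≤ n - 1 → X t + (n - 1 - t) = v := by
    intro t h1 h2
    have := httail (n - 1 - t) (by omega)
    rwa [show n - 1 - (n - 1 - t) = t by omega] at this
  have hXs1 : X s = 1 := by
    by_contra hne
    have hXs2 : 2 ≤ X s := by have := hX1 s (by omega); omega
    have hsv := htails s le_rfl hsle
    obtain ⟨p, hpn, hp1⟩ := hCX 1 le_rfl hm1
    by_cases hps : p < s
    · have := H1 p hps
      omega
    · have := hchain (p - s) s (by omega) (by omega)
      rw [show s + (p - s) = p by omega] at this
      omega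
  have hveq : v = (n - 1 - s) + 1 := by
    have := htails s le_rfl hsle
    omega
  have htailval : ∀ t, s ≤ t → t < n → X t = t - s + 1 := by
    intro t h1 h2
    have := htails t h1 (by omega)
    omega
  -- identification of Pv and the value of y
  have hPv : Pv = Finset.Icc ((n - 1 - s) + 1) (maxVal n x) := by
    ext u
    rw [hPvmem u, Finset.mem_Icc]
    constructor
    · rintro ⟨j, hjs, rfl⟩
      exact ⟨by have := H1 j hjs; omega, hXle j (by omega)⟩
    · rintro ⟨hu1, hu2⟩
      obtain ⟨p, hpn, hpu⟩ := hCX u (by omega) hu2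
      by_cases hps : p < s
      · exact ⟨p, hps, hpu⟩
      · obtain ⟨j1, hj1s, hj1v⟩ := hfv
        have := htailval p (by omega) hpn
        refine ⟨j1, hj1s, ?_⟩
        rw [hj1v]
        omega
  have hyval : ∀ i : Fin s, y i = X (i : ℕ) - (n - 1 - s) := by
    intro i
    have hge := H1 (i : ℕ) i.2
    have hlem := hXle (i : ℕ) (by have := i.2; omega)
    rw [hyd]
    simp only
    rw [hPv, rankv_Icc (by omega) (by omega) hlem]
    omega
  -- conclude
  refine ⟨s, hs1, by omega, y, hyS, ?_⟩
  funext i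
  rw [xeta x i, hXdef (i : ℕ) i.2]
  by_cases h : (i : ℕ) < s
  · rw [xeta (insF n s y) i, insF_preN (by omega) (i : ℕ) h i.2, hyval ⟨(i : ℕ), h⟩]
    have := H1 (i : ℕ) h
    show X (i : ℕ) = X (i : ℕ) - (n - 1 - s) + (n - 1 - s)
    omega
  · rw [xeta (insF n s y) i, insF_tailN (i : ℕ) i.2 (by omega)]
    exact htailval (i : ℕ) (by omega) i.2

lemma F1_ins {n s : ℕ} (hs1 : 1 ≤ s) (hsn : s < n) {y : Fin s → ℕ}
    (hF : F1prop s y) : F1prop n (insF n s y) := by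
  intro u hu hex
  obtain ⟨i, hxi⟩ := hex
  by_cases hcase : u ≤ n - s
  · have hb : s + u - 1 < n := by omega
    have hbs : s < n := hsn
    refine ⟨⟨s, hbs⟩, ⟨s + u - 1, hb⟩, Fin.mk_lt_mk.mpr (by omega), ?_, ?_⟩
    · rw [insF_tailN _ hb (by omega)]; omega
    · rw [insF_tailN _ hbs le_rfl]; omega
  · rcases lt_or_ge (i : ℕ) s with h | h
    · rw [xeta (insF n s y) i, insF_preN hsn _ h i.2] at hxi
      have hyv : y ⟨(i : ℕ), h⟩ = u - (n - 1 - s) := by omega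
      obtain ⟨a, o, hao, ho, ha⟩ := hF (u - (n - 1 - s)) (by omega) ⟨⟨(i : ℕ), h⟩, hyv⟩
      have han : (a : ℕ) < n := by have := a.2; omega
      have hon : (o : ℕ) < n := by have := o.2; omega
      refine ⟨⟨(a : ℕ), han⟩, ⟨(o : ℕ), hon⟩, Fin.mk_lt_mk.mpr hao, ?_, ?_⟩
      · rw [insF_preN hsn _ o.2 hon]
        have he : y ⟨(o : ℕ), o.2⟩ = y o := congrArg y (Fin.eta o o.2)
        omega
      · rw [insF_preN hsn _ a.2 han]
        have he : y ⟨(a : ℕ), a.2⟩ = y a := congrArg y (Fin.eta a a.2)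
        omega
    · rw [xeta (insF n s y) i, insF_tailN _ i.2 h] at hxi
      have := i.2
      omega

lemma F1all : ∀ n, ∀ x ∈ Sset n, F1prop n x := by
  intro n
  induction n using Nat.strong_induction_on with
  | _ n IH =>
    intro x hx
    by_cases hn2 : 2 ≤ n
    · obtain ⟨s, hs1, hsn, y, hy, rfl⟩ := decomp hn2 (fun s hs => IH s hs) hx
      exact F1_ins hs1 hsn (IH s hsn y hy)
    · intro u hu hex
      obtain ⟨i, hxi⟩ := hex
      have hn01 : n = 0 ∨ n = 1 := by omega
      rcases hn01 with rfl | rfl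
      · exact i.elim0
      · have hE := hx.1.1.1
        have := (hE i).2
        omega

lemma Sfin (n : ℕ) : (Sset n).Finite := by
  apply Set.Finite.subset (Set.finite_Icc (fun _ : Fin n => 1) (fun _ => n))
  intro x hx
  rw [Set.mem_Icc]
  have hE := hx.1.1.1
  exact ⟨fun i => (hE i).1, fun i => (hE i).2⟩

lemma S1eq : Sset 1 = {fun _ => 1} := by
  ext x
  constructor
  · intro hx
    have hE := hx.1.1.1
    have : x = fun _ => 1 := by
      funext i
      have := hE i
      omega
    exact this
  · intro hx
    rw [Set.mem_singleton_iff] at hx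
    subst hx
    have hne : (Finset.univ : Finset (Fin 1)).Nonempty := ⟨⟨0, one_pos⟩, Finset.mem_univ _⟩
    have hmax : maxVal 1 (fun _ : Fin 1 => 1) = 1 := by
      rw [maxVal, Finset.sup_const hne]
    refine mem_Sset 1 _ (fun i => ⟨le_rfl, le_rfl⟩) ?_ ?_ ?_
    · intro v h1 h2
      rw [hmax] at h2
      exact ⟨⟨0, one_pos⟩, by omega⟩
    · apply Set.ext
      intro i
      simp only [Ascbot, Nub, Set.mem_setOf_eq]
      have hi0 : (i : ℕ) = 0 := by have := i.2; omega
      constructor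
      · intro _ j hj
        have : (j : ℕ) < (i : ℕ) := hj
        have := j.2
        omega
      · intro _
        exact Or.inl hi0
    · rintro ⟨a, b, c, hab, hbc, -, -⟩
      have h1 : (a : ℕ) < (b : ℕ) := hab
      have h2 : (b : ℕ) < (c : ℕ) := hbc
      have := c.2
      omega

lemma ins_inj {n s : ℕ} (hsn : s < n) {y y' : Fin s → ℕ}
    (h : insF n s y = insF n s y') : y = y' := by
  funext i
  have hin : (i : ℕ) < n := lt_trans i.2 hsn
  have hc := congrFun h ⟨(i : ℕ), hin⟩
  rw [insF_preN hsn _ i.2 hin, insF_preN hsn _ i.2 hin] at hc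
  have e1 : y ⟨(i : ℕ), i.2⟩ = y i := congrArg y (Fin.eta i i.2)
  have e2 : y' ⟨(i : ℕ), i.2⟩ = y' i := congrArg y' (Fin.eta i i.2)
  omega

lemma doubling {n : ℕ} (hn : 3 ≤ n) :
    (Sset n).ncard = 2 * (Sset (n - 1)).ncard := by
  classical
  have hn1 : n - 1 < n := by omega
  set C0 : Set (Fin n → ℕ) := {x | x ∈ Sset n ∧ x ⟨n - 1, hn1⟩ = 1} with hC0d
  set C1 : Set (Fin n → ℕ) := {x | x ∈ Sset n ∧ x ⟨n - 1, hn1⟩ ≠ 1} with hC1d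
  have hsplit : Sset n = C0 ∪ C1 := by
    ext x
    simp only [hC0d, hC1d, Set.mem_union, Set.mem_setOf_eq]
    tauto
  have hdisj : Disjoint C0 C1 := by
    rw [Set.disjoint_left]
    rintro x ⟨-, h1⟩ ⟨-, h2⟩
    exact h2 h1
  have hfin0 : C0.Finite := (Sfin n).subset (fun x hx => hx.1)
  have hfin1 : C1.Finite := (Sfin n).subset (fun x hx => hx.1)
  have hC0 : C0 = (insF n (n - 1)) '' Sset (n - 1) := by
    ext x
    constructor
    · rintro ⟨hxS, hlast⟩
      obtain ⟨s, hs1, hsn, y, hy, rfl⟩ := decomp (by omega) (fun s hs => F1all s) hxS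
      have hlv : insF n s y ⟨n - 1, hn1⟩ = n - s := by
        rw [insF_tailN _ hn1 (by omega)]; omega
      rw [hlv] at hlast
      have hseq : s = n - 1 := by omega
      subst hseq
      exact ⟨y, hy, rfl⟩
    · rintro ⟨y, hy, rfl⟩
      refine ⟨ins_mem (by omega) hn1 hy, ?_⟩
      rw [insF_tailN _ hn1 (by omega)]
      omega
  have hcard0 : C0.ncard = (Sset (n - 1)).ncard := by
    rw [hC0]
    exact Set.ncard_image_of_injOn (fun y _ y' _ h => ins_inj hn1 h)
  set del : (Fin n → ℕ) → (Fin (n - 1) → ℕ) := fun x i =>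
    (if (i : ℕ) + x ⟨n - 1, hn1⟩ < n then x ⟨(i : ℕ), lt_trans i.2 hn1⟩
     else x ⟨(i : ℕ) + 1, by have := i.2; omega⟩) - 1 with hdeld
  have hdel : ∀ (s : ℕ), 1 ≤ s → s < n - 1 → ∀ (y : Fin s → ℕ),
      del (insF n s y) = insF (n - 1) s y := by
    intro s hs1 hsn2 y
    funext i
    have hlastv : insF n s y ⟨n - 1, hn1⟩ = n - s := by
      rw [insF_tailN _ hn1 (by omega)]; omega
    rw [hdeld]
    simp only
    rw [hlastv]
    by_cases h : (i : ℕ) < s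
    · rw [if_pos (by omega), insF_preN (by omega) _ h (by omega),
        xeta (insF (n - 1) s y) i, insF_preN hsn2 _ h i.2]
      omega
    · have hi2 := i.2
      rw [if_neg (by omega), insF_tailN ((i : ℕ) + 1) (by omega) (by omega),
        xeta (insF (n - 1) s y) i, insF_tailN (i : ℕ) i.2 (by omega)]
      omega
  have hbij : Set.BijOn del C1 (Sset (n - 1)) := by
    refine ⟨?_, ?_, ?_⟩
    · rintro x ⟨hxS, hlast⟩
      obtain ⟨s, hs1, hsn, y, hy, rfl⟩ := decomp (by omega) (fun s hs => F1all s) hxS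
      have hlv : insF n s y ⟨n - 1, hn1⟩ = n - s := by
        rw [insF_tailN _ hn1 (by omega)]; omega
      rw [hlv] at hlast
      have hsn2 : s < n - 1 := by omega
      rw [hdel s hs1 hsn2 y]
      exact ins_mem hs1 hsn2 hy
    · rintro x ⟨hxS, hlast⟩ x' ⟨hxS', hlast'⟩ heq
      obtain ⟨s, hs1, hsn, y, hy, rfl⟩ := decomp (by omega) (fun s hs => F1all s) hxS
      obtain ⟨s', hs1', hsn', y', hy', rfl⟩ := decomp (by omega) (fun s hs => F1all s) hxS'
      have hlv : insF n s y ⟨n - 1, hn1⟩ = n - s := by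
        rw [insF_tailN _ hn1 (by omega)]; omega
      have hlv' : insF n s' y' ⟨n - 1, hn1⟩ = n - s' := by
        rw [insF_tailN _ hn1 (by omega)]; omega
      rw [hlv] at hlast
      rw [hlv'] at hlast'
      have hsn2 : s < n - 1 := by omega
      have hsn2' : s' < n - 1 := by omega
      rw [hdel s hs1 hsn2 y, hdel s' hs1' hsn2' y'] at heq
      have hn2b : n - 2 < n - 1 := by omega
      have hv1 := congrFun heq ⟨n - 2, hn2b⟩
      rw [insF_tailN (n - 2) hn2b (by omega), insF_tailN (n - 2) hn2b (by omega)] at hv1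
      have hss : s = s' := by omega
      subst hss
      rw [ins_inj (by omega : s < n - 1) heq]
    · intro z hz
      obtain ⟨s, hs1, hsn2, y, hy, rfl⟩ := decomp (by omega) (fun s hs => F1all s) hz
      refine ⟨insF n s y, ⟨ins_mem hs1 (by omega) hy, ?_⟩, hdel s hs1 hsn2 y⟩
      rw [insF_tailN _ hn1 (by omega)]
      omega
  have hcard1 : C1.ncard = (Sset (n - 1)).ncard := by
    calc C1.ncard = (del '' C1).ncard := (Set.ncard_image_of_injOn hbij.injOn).symm
      _ = _ := by rw [hbij.image_eq]
  rw [hsplit, Set.ncard_union_eq hdisj hfin0 hfin1, hcard0, hcard1]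
  omega

lemma ncard_S2 : (Sset 2).ncard = 1 := by
  have heq : Sset 2 = {insF 2 1 (fun _ => 1)} := by
    ext x
    constructor
    · intro hx
      obtain ⟨s, hs1, hsn, y, hy, rfl⟩ := decomp le_rfl (fun s hs => F1all s) hx
      have hseq : s = 1 := by omega
      subst hseq
      rw [S1eq, Set.mem_singleton_iff] at hy
      rw [hy]
      rfl
    · intro hx
      rw [Set.mem_singleton_iff] at hx
      rw [hx]
      refine ins_mem le_rfl (by omega) ?_
      rw [S1eq]
      rfl
  rw [heq, Set.ncard_singleton]

theorem stmt9 (n : ℕ) (hn : 2 ≤ n) :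
    {x : Fin n → ℕ | IsRAS n x ∧ Avoids122 n x}.ncard = 2 ^ (n - 2) := by
  have hSs : {x : Fin n → ℕ | IsRAS n x ∧ Avoids122 n x} = Sset n := rfl
  rw [hSs]
  induction n, hn using Nat.le_induction with
  | base => simpa using ncard_S2
  | succ n hn ih =>
    have hd := doubling (show 3 ≤ n + 1 by omega)
    have he : n + 1 - 1 = n := by omega
    rw [he] at hd
    rw [hd, ih rfl]
    rw [show n + 1 - 2 = n - 2 + 1 by omega, pow_succ]
    ring
end

section
/- For every 122-avoiding revised ascent sequence x of length n ≥ 2 with max(x) = m, there exist an integer i ≥ 1, a strictly decreasing sequence m = a_1 > a_2 > ⋯ > a_i = 1, and nonnegative integers b_1,...,b_i such that x equals the concatenation a_1^{b_1+1} [a_2↗a_1] a_2^{b_2} [a_3↗a_2] a_3^{b_3} ⋯ a_{i-1}^{b_{i-1}} [a_i↗a_{i-1}] a_i^{b_i}, where a^b denotes b copies of a and [p↗q] denotes the increasing run p, p+1, ..., q. -/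
/-- The increasing run `p, p+1, …, q` as a list. -/
def run (p q : ℕ) : List ℕ := (List.range (q - p + 1)).map (fun t => p + t)

/-!
The maximum `m` sits at position `0`: its first occurrence is a nub, so anywhere else it would
start an ascent. The sequence is then read block by block, keeping the invariant that at the end
of a plateau of value `c` every earlier entry is `≥ c` and every later one is `≤ c` (a larger later
value would complete a `122` with its earlier occurrence). The next entry `u < c` is new, hence
starts an ascent, and this ascent climbs by steps of one exactly up to `c`: if it skipped a value
`w`, the first occurrence of `w` would start another ascent reaching `c`, and the two occurrences of
`c` after `u` would form a `122`. After `c` the sequence stays at `u` for a while and then drops,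
which restores the invariant with `c := u`.
-/

/-- The properties of a `122`-avoiding revised ascent sequence `x` with maximum `m`, read as
`X : ℕ → ℕ` with `X i = x i` for `i < n`. -/
structure IsAvoidingRAS (n m : ℕ) (X : ℕ → ℕ) : Prop where
  one_le : ∀ j < n, 1 ≤ X j
  le_max : ∀ j < n, X j ≤ m
  exists_eq : ∀ v, 1 ≤ v → v ≤ m → ∃ j < n, X j = v
  lt_succ_of_nub : ∀ i, 0 < i → i < n → (∀ j < i, X j ≠ X i) → i + 1 < n ∧ X i < X (i + 1)
  not_122 : ∀ i j k, i < j → j < k → k < n → X i < X j → X j ≠ X k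

theorem exists_plateau {α : Type*} (X : ℕ → α) (n : ℕ) (a : α) {s : ℕ} (hs : s ≤ n) :
    ∃ b, s + b ≤ n ∧ (∀ t < b, X (s + t) = a) ∧ (s + b < n → X (s + b) ≠ a) := by
  by_cases h : s < n ∧ X s = a
  · obtain ⟨b, hbn, hplat, hend⟩ := exists_plateau X n a (s := s + 1) h.1
    refine ⟨b + 1, by omega, fun t ht => ?_, by rwa [show s + (b + 1) = s + 1 + b by omega]⟩
    cases t with
    | zero => exact h.2
    | succ t => rw [show s + (t + 1) = s + 1 + t by omega]; exact hplat t (by omega)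
  · exact ⟨0, by omega, by simp, fun hsn hXs => h ⟨hsn, hXs⟩⟩
termination_by n - s

theorem drop_map_range_eq_append {α : Type*} (X : ℕ → α) {n s k : ℕ} (h : s + k ≤ n) :
    ((List.range n).map X).drop s =
      (List.range k).map (fun t => X (s + t)) ++ ((List.range n).map X).drop (s + k) := by
  have hdrop (s : ℕ) : ((List.range n).map X).drop s =
      (List.range (n - s)).map (fun t => X (s + t)) := by
    apply List.ext_getElem <;> simp
  rw [hdrop, hdrop, show n - s = k + (n - (s + k)) by omega, List.range_add, List.map_append,
    List.map_map]
  congr 2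
  funext t
  simp [Nat.add_assoc]

theorem drop_map_range_eq_run_append (X : ℕ → ℕ) {n s a c : ℕ} (h : s + (c - a) < n)
    (hX : ∀ t ≤ c - a, X (s + t) = a + t) :
    ((List.range n).map X).drop s = run a c ++ ((List.range n).map X).drop (s + (c - a) + 1) := by
  rw [drop_map_range_eq_append X (k := c - a + 1) (by omega), ← Nat.add_assoc, run]
  congr 1
  exact List.map_congr_left fun t ht => hX t (by simp at ht; omega)

theorem drop_map_range_eq_replicate_append {α : Type*} (X : ℕ → α) {a : α} {n s b : ℕ}
    (h : s + b ≤ n) (hX : ∀ t < b, X (s + t) = a) :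
    ((List.range n).map X).drop s = List.replicate b a ++ ((List.range n).map X).drop (s + b) := by
  rw [drop_map_range_eq_append X h]
  congr 1
  rw [List.map_congr_left fun t ht => hX t (by simpa using ht), List.map_const', List.length_range]

/-- `Staircase c l`: `l = [a₂↗c] a₂^b₂ [a₃↗a₂] a₃^b₃ ⋯ [1↗aᵢ₋₁] 1^bᵢ` with `c > a₂ > ⋯ > 1`. -/
inductive Staircase : ℕ → List ℕ → Prop
  | nil : Staircase 1 []
  | cons {a c : ℕ} (b : ℕ) {l : List ℕ} (hac : a < c) (hl : Staircase a l) :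
      Staircase c (run a c ++ (List.replicate b a ++ l))

theorem Staircase.exists_seq {c : ℕ} {l : List ℕ} (h : Staircase c l) (b₀ : ℕ) :
    ∃ i, 1 ≤ i ∧ ∃ a b : ℕ → ℕ, a 0 = c ∧ b 0 = b₀ ∧ a (i - 1) = 1 ∧
      (∀ j, j + 1 < i → a (j + 1) < a j) ∧
      l = List.flatten ((List.range (i - 1)).map
        (fun j => run (a (j + 1)) (a j) ++ List.replicate (b (j + 1)) (a (j + 1)))) := by
  induction h generalizing b₀ with
  | nil => exact ⟨1, le_rfl, fun _ => 1, fun _ => b₀, rfl, rfl, rfl, by omega, rfl⟩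
  | @cons a c b l hac _ ih =>
    obtain ⟨i, hi, a', b', ha0, hb0, hai, hdec, rfl⟩ := ih b
    refine ⟨i + 1, by omega, fun | 0 => c | j + 1 => a' j, fun | 0 => b₀ | j + 1 => b' j,
      rfl, rfl, ?_, ?_, ?_⟩
    · rw [show i + 1 - 1 = i - 1 + 1 by omega]
      exact hai
    · rintro (_ | j) hj
      · show a' 0 < c
        rwa [ha0]
      · exact hdec j (by omega)
    · rw [show i + 1 - 1 = i - 1 + 1 by omega, List.range_succ_eq_map, List.map_cons,
        List.flatten_cons, List.map_map, ← List.append_assoc]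
      simp only [ha0, hb0]
      rfl

namespace IsAvoidingRAS

variable {n m : ℕ} {X : ℕ → ℕ}

theorem zero_eq (hX : IsAvoidingRAS n m X) (hn : 0 < n) : X 0 = m := by
  classical
  have hm : ∃ j, j < n ∧ X j = m :=
    hX.exists_eq m ((hX.one_le 0 hn).trans (hX.le_max 0 hn)) le_rfl
  obtain ⟨hkn, hkm⟩ := Nat.find_spec hm
  rcases Nat.eq_zero_or_pos (Nat.find hm) with hk | hk
  · rwa [hk] at hkm
  have hnub : ∀ j < Nat.find hm, X j ≠ X (Nat.find hm) := fun j hj hjm =>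
    Nat.find_min hm hj ⟨by omega, hjm.trans hkm⟩
  obtain ⟨hk1, hlt⟩ := hX.lt_succ_of_nub _ hk hkn hnub
  have := hX.le_max _ hk1
  omega

theorem lt_succ_of_lt_top (hX : IsAvoidingRAS n m X) {p C : ℕ} (hp : 0 < p)
    (hbefore : ∀ j < p, C ≤ X j) (hafter : ∀ k, p ≤ k → k < n → X k ≤ C)
    {r : ℕ} (hpr : p ≤ r) (hrn : r < n) (hrC : X r < C) (hnew : p < r → X p < X r) :
    r + 1 < n ∧ X r < X (r + 1) ∧ X (r + 1) ≤ C := by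
  have hnub : ∀ j < r, X j ≠ X r := by
    intro j hjr hj
    rcases lt_or_ge j p with hjp | hjp
    · have := hbefore j hjp
      omega
    rcases hjp.eq_or_lt with rfl | hjp
    · have := hnew hjr
      omega
    · exact hX.not_122 p j r hjp hjr hrn (hj ▸ hnew (by omega)) hj
  obtain ⟨hr1, hlt⟩ := hX.lt_succ_of_nub r (by omega) hrn hnub
  exact ⟨hr1, hlt, hafter _ (by omega) hr1⟩

theorem exists_eq_top (hX : IsAvoidingRAS n m X) {p C : ℕ} (hp : 0 < p)
    (hbefore : ∀ j < p, C ≤ X j) (hafter : ∀ k, p ≤ k → k < n → X k ≤ C)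
    {r : ℕ} (hpr : p ≤ r) (hrn : r < n) (hrC : X r ≤ C) (hnew : p < r → X p < X r) :
    ∃ k, r ≤ k ∧ k < n ∧ X k = C ∧ ∀ j, r ≤ j → j ≤ k → X r ≤ X j := by
  rcases hrC.eq_or_lt with hrC | hrC
  · exact ⟨r, le_rfl, hrn, hrC, fun j h₁ h₂ => (show j = r by omega) ▸ le_rfl⟩
  obtain ⟨hr1, hlt, hle⟩ := hX.lt_succ_of_lt_top hp hbefore hafter hpr hrn hrC hnew
  have hpr1 : X p < X (r + 1) := by
    rcases hpr.eq_or_lt with rfl | hpr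
    · exact hlt
    · exact (hnew hpr).trans hlt
  obtain ⟨k, hrk, hkn, hkC, hmono⟩ :=
    hX.exists_eq_top hp hbefore hafter (r := r + 1) (by omega) hr1 hle fun _ => hpr1
  refine ⟨k, by omega, hkn, hkC, fun j h₁ h₂ => ?_⟩
  rcases h₁.eq_or_lt with rfl | h₁
  · exact le_rfl
  · exact hlt.le.trans (hmono j h₁ h₂)
termination_by C - X r

theorem ascends_by_one_to_top (hX : IsAvoidingRAS n m X) {p C : ℕ} (hp : 0 < p)
    (hbefore : ∀ j < p, C ≤ X j) (hafter : ∀ k, p ≤ k → k < n → X k ≤ C) (hpn : p < n) :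
    p + (C - X p) < n ∧ ∀ t ≤ C - X p, X (p + t) = X p + t := by
  suffices h : ∀ t ≤ C - X p, p + t < n ∧ ∀ j ≤ t, X (p + j) = X p + j from
    ⟨(h _ le_rfl).1, (h _ le_rfl).2⟩
  intro t
  induction t with
  | zero => exact fun _ => ⟨by simpa using hpn, fun j hj => by simp [show j = 0 by omega]⟩
  | succ t ih =>
    intro ht
    obtain ⟨htn, hvals⟩ := ih (by omega)
    have hpC := hafter p le_rfl hpn
    obtain ⟨hn1, hlt, hle⟩ := hX.lt_succ_of_lt_top hp hbefore hafter (r := p + t) (by omega)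
      htn (by rw [hvals t le_rfl]; omega) fun _ => by rw [hvals t le_rfl]; omega
    suffices hstep : X (p + t + 1) = X p + (t + 1) by
      refine ⟨hn1, fun j hj => ?_⟩
      rcases (show j ≤ t ∨ j = t + 1 by omega) with hj | rfl
      · exact hvals j hj
      · exact hstep
    by_contra hskip
    rw [hvals t le_rfl] at hlt
    -- the skipped value occurs only after the ascent from `p + t + 1` has reached `C`,
    -- and the ascent from its first occurrence reaches `C` once more
    obtain ⟨r, hrn, hrw⟩ := hX.exists_eq (X p + t + 1) (by omega)
      (by have := hX.le_max _ hn1; omega)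
    have hpr : p ≤ r := by
      by_contra hrp
      have := hbefore r (by omega)
      omega
    obtain ⟨k₁, hk₁, hk₁n, hk₁C, hmono⟩ :=
      hX.exists_eq_top hp hbefore hafter (r := p + t + 1) (by omega) hn1 hle fun _ => by omega
    have hk₁r : k₁ < r := by
      by_contra hrk
      rcases (show r ≤ p + t ∨ p + t + 1 ≤ r by omega) with hr | hr
      · have := hvals (r - p) (by omega)
        rw [Nat.add_sub_cancel' hpr] at this
        omega
      · have := hmono r hr (by omega)
        omega
    obtain ⟨k₂, hk₂, hk₂n, hk₂C, -⟩ :=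
      hX.exists_eq_top hp hbefore hafter hpr hrn (by omega) fun _ => by omega
    exact hX.not_122 p k₁ k₂ (by omega) (by omega) hk₂n (by omega) (hk₁C.trans hk₂C.symm)

theorem staircase_drop (hX : IsAvoidingRAS n m X) {s c : ℕ} (hs : 0 < s) (hsn : s ≤ n)
    (hc : 1 ≤ c) (hbefore : ∀ j < s, c ≤ X j) (hafter : ∀ k, s ≤ k → k < n → X k ≤ c)
    (hne : s < n → X s ≠ c) : Staircase c (((List.range n).map X).drop s) := by
  rcases hsn.eq_or_lt with rfl | hsn
  · obtain ⟨j, hjn, hj⟩ := hX.exists_eq 1 le_rfl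
      (hc.trans ((hbefore 0 hs).trans (hX.le_max 0 hs)))
    have := hbefore j hjn
    rw [show c = 1 by omega, List.drop_eq_nil_of_le (by simp)]
    exact Staircase.nil
  have hu : X s < c := lt_of_le_of_ne (hafter s le_rfl hsn) (hne hsn)
  obtain ⟨hclimbn, hclimb⟩ := hX.ascends_by_one_to_top hs hbefore hafter hsn
  obtain ⟨b, hbn, hplat, hend⟩ := exists_plateau X n (X s) (s := s + (c - X s) + 1) (by omega)
  have hbefore' : ∀ j < s + (c - X s) + 1 + b, X s ≤ X j := by
    intro j hj
    rcases (show j < s ∨ s ≤ j ∧ j ≤ s + (c - X s) ∨ s + (c - X s) + 1 ≤ j by omega)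
      with hj' | ⟨hj₁, hj₂⟩ | hj'
    · exact hu.le.trans (hbefore j hj')
    · have := hclimb (j - s) (by omega)
      rw [Nat.add_sub_cancel' hj₁] at this
      omega
    · have := hplat (j - (s + (c - X s) + 1)) (by omega)
      rw [Nat.add_sub_cancel' hj'] at this
      exact this.ge
  -- every value in `(X s, c]` occurred in the ascent after `X s`
  have hafter' : ∀ k, s + (c - X s) + 1 + b ≤ k → k < n → X k ≤ X s := by
    intro k hk hkn
    by_contra hlt
    have hkc := hafter k (by omega) hkn
    have := hclimb (X k - X s) (by omega)
    exact hX.not_122 s (s + (X k - X s)) k (by omega) (by omega) hkn (by omega) (by omega)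
  have hrest := hX.staircase_drop (by omega) hbn (hX.one_le s hsn) hbefore' hafter' hend
  rw [drop_map_range_eq_run_append X hclimbn hclimb,
    drop_map_range_eq_replicate_append X hbn hplat]
  exact Staircase.cons b hu hrest
termination_by n - s

end IsAvoidingRAS

theorem IsRAS.isAvoidingRAS {n : ℕ} {x : Fin n → ℕ} (hx : IsRAS n x) (hav : Avoids122 n x) :
    IsAvoidingRAS n (maxVal n x) (Function.extend Fin.val x 0) := by
  have hE (j : ℕ) (hj : j < n) : Function.extend Fin.val x 0 j = x ⟨j, hj⟩ :=
    Fin.val_injective.extend_apply x 0 ⟨j, hj⟩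
  obtain ⟨⟨hendo, hcayley⟩, hasc⟩ := hx
  refine ⟨fun j hj => ?_, fun j hj => ?_, fun v h₁ h₂ => ?_, fun i hi hin hnub => ?_,
    fun i j k hij hjk hkn hlt heq => hav ?_⟩
  · exact (hE j hj) ▸ (hendo ⟨j, hj⟩).1
  · exact (hE j hj) ▸ Finset.le_sup (Finset.mem_univ _)
  · obtain ⟨⟨i, hi⟩, rfl⟩ := hcayley v h₁ h₂
    exact ⟨i, hi, hE i hi⟩
  · have hmem : (⟨i, hin⟩ : Fin n) ∈ Ascbot n x := hasc ▸ fun j hj => by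
      simpa only [hE _ j.2, hE i hin] using hnub j hj
    obtain h | ⟨hi1, hlt⟩ := hmem
    · exact absurd h hi.ne'
    · exact ⟨hi1, by rwa [hE i hin, hE (i + 1) hi1]⟩
  · refine ⟨⟨i, by omega⟩, ⟨j, by omega⟩, ⟨k, hkn⟩, hij, hjk, ?_, ?_⟩
    · rwa [hE i (by omega), hE j (by omega)] at hlt
    · rwa [hE j (by omega), hE k hkn] at heq

theorem List.ofFn_eq_map_range_extend {α : Type*} {n : ℕ} (x : Fin n → α) (d : ℕ → α) :
    List.ofFn x = (List.range n).map (Function.extend Fin.val x d) := by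
  rw [List.ofFn_eq_map, ← List.map_coe_finRange_eq_range, List.map_map]
  congr 1
  funext i
  exact (Fin.val_injective.extend_apply x d i).symm

theorem stmt10 (n : ℕ) (hn : 2 ≤ n) (x : Fin n → ℕ)
    (hx : IsRAS n x) (hav : Avoids122 n x) :
    ∃ i : ℕ, 1 ≤ i ∧ ∃ a b : ℕ → ℕ,
      a 0 = maxVal n x ∧ a (i - 1) = 1 ∧
      (∀ j, j + 1 < i → a (j + 1) < a j) ∧
      List.ofFn x =
        List.replicate (b 0 + 1) (a 0) ++
          (List.flatten ((List.range (i - 1)).map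
            (fun j => run (a (j + 1)) (a j) ++
              List.replicate (b (j + 1)) (a (j + 1))))) := by
  set X := Function.extend Fin.val x 0
  have hX := hx.isAvoidingRAS hav
  have hX0 : X 0 = maxVal n x := hX.zero_eq (by omega)
  obtain ⟨s, hsn, hplat, hend⟩ := exists_plateau X n (maxVal n x) (Nat.zero_le n)
  simp only [Nat.zero_add] at hsn hplat hend
  have hs : 0 < s := Nat.pos_of_ne_zero fun h => hend (by omega) (by rw [h, hX0])
  have hstairs := hX.staircase_drop hs hsn (hX0 ▸ hX.one_le 0 (by omega))
    (fun j hj => (hplat j hj).ge) (fun k _ hk => hX.le_max k hk) hend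
  obtain ⟨i, hi, a, b, ha0, hb0, hai, hdec, hl⟩ := hstairs.exists_seq (s - 1)
  refine ⟨i, hi, a, b, ha0, hai, hdec, ?_⟩
  have hL := drop_map_range_eq_replicate_append X (n := n) (s := 0) (b := s) (by omega)
    (by simpa using hplat)
  rw [List.drop_zero, Nat.zero_add] at hL
  rw [List.ofFn_eq_map_range_extend, hL, hl, hb0, ha0, Nat.sub_add_cancel hs]
end

section
/- For every n ≥ 1, a revised ascent sequence of length n avoids the pattern 231 if and only if it avoids the pattern 321; hence the sets of 231-avoiding and 321-avoiding revised ascent sequences of length n are equal. -/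
/-- `x` avoids the pattern `231`. -/
def Avoids231 (n : ℕ) (x : Fin n → ℕ) : Prop :=
  ¬ ∃ i j k : Fin n, i < j ∧ j < k ∧ x k < x i ∧ x i < x j

/-- `x` avoids the pattern `321`. -/
def Avoids321 (n : ℕ) (x : Fin n → ℕ) : Prop :=
  ¬ ∃ i j k : Fin n, i < j ∧ j < k ∧ x j < x i ∧ x k < x j

theorem stmt12 (n : ℕ) (hn : 1 ≤ n) :
    (∀ x : Fin n → ℕ, IsRAS n x → (Avoids231 n x ↔ Avoids321 n x)) ∧
    {x : Fin n → ℕ | IsRAS n x ∧ Avoids231 n x} =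
      {x : Fin n → ℕ | IsRAS n x ∧ Avoids321 n x} := by
  classical
  have main : ∀ x : Fin n → ℕ, IsRAS n x → (Avoids231 n x ↔ Avoids321 n x) := by
    intro x hx
    obtain ⟨⟨hendo, hcay⟩, hAN⟩ := hx
    -- leftmost occurrences exist
    have hexmin : ∀ v : ℕ, (∃ i, x i = v) →
        ∃ q : Fin n, x q = v ∧ ∀ j, j < q → x j ≠ v := by
      rintro v ⟨i, hi⟩
      set S := Finset.univ.filter (fun i => x i = v) with hSdef
      have hS : S.Nonempty := ⟨i, by simp [hSdef, hi]⟩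
      refine ⟨S.min' hS, ?_, ?_⟩
      · have := S.min'_mem hS
        simpa [hSdef] using this
      · intro j hj hjv
        have : S.min' hS ≤ j := S.min'_le j (by simp [hSdef, hjv])
        exact absurd hj (not_lt.mpr this)
    -- a leftmost occurrence is an ascent bottom
    have hnub : ∀ q : Fin n, (∀ j, j < q → x j ≠ x q) →
        q.1 = 0 ∨ ∃ h : q.1 + 1 < n, x q < x ⟨q.1 + 1, h⟩ := by
      intro q hq
      have hq' : q ∈ Nub n x := hq
      rw [← hAN] at hq'
      exact hq'
    -- x 0 is the maximum
    have hx0 : ∀ i : Fin n, x i ≤ x ⟨0, hn⟩ := by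
      intro i
      have hne : (Finset.univ : Finset (Fin n)).Nonempty := ⟨i, Finset.mem_univ i⟩
      obtain ⟨i0, -, hi0⟩ := Finset.exists_mem_eq_sup Finset.univ hne x
      obtain ⟨q, hq, hqmin⟩ := hexmin (x i0) ⟨i0, rfl⟩
      have hmaxq : ∀ t : Fin n, x t ≤ x q := by
        intro t
        have h1 : x t ≤ maxVal n x := Finset.le_sup (Finset.mem_univ t)
        have h2 : maxVal n x = x i0 := hi0
        omega
      rcases hnub q (fun j hj => by rw [hq]; exact hqmin j hj) with h0 | ⟨h, hlt⟩
      · have hq0 : q = ⟨0, hn⟩ := Fin.ext h0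
        rw [← hq0]; exact hmaxq i
      · exact absurd (hmaxq ⟨q.1 + 1, h⟩) (not_le.mpr hlt)
    constructor
    · -- Avoids231 → Avoids321
      rintro h231 ⟨i, j, k, hij, hjk, h1, h2⟩
      -- x j < x i, x k < x j; take leftmost occurrence q of x j
      obtain ⟨q, hq, hqmin⟩ := hexmin (x j) ⟨j, rfl⟩
      have hqj : q ≤ j := by
        by_contra hcon
        exact hqmin j (not_le.mp hcon) rfl
      have hqne0 : q.1 ≠ 0 := by
        intro h0
        have he : q = ⟨0, hn⟩ := Fin.ext h0
        have hle := hx0 i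
        rw [← he, hq] at hle
        omega
      rcases hnub q (fun j' hj' => by rw [hq]; exact hqmin j' hj') with h0 | ⟨h, hlt⟩
      · exact hqne0 h0
      · set q' : Fin n := ⟨q.1 + 1, h⟩ with hq'def
        have hq'k : q' < k := by
          have hle : q.1 + 1 ≤ k.1 := by
            have : q.1 ≤ j.1 := hqj
            have : j.1 < k.1 := hjk
            omega
          rcases lt_or_eq_of_le hle with hlt' | heq
          · exact hlt'
          · exfalso
            have : q' = k := Fin.ext heq
            rw [this, hq] at hlt
            omega
        exact h231 ⟨q, q', k, by simp [hq'def, Fin.lt_def], hq'k,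
          by rw [hq]; exact h2, hlt⟩
    · -- Avoids321 → Avoids231
      rintro h321 ⟨i, j, k, hij, hjk, h1, h2⟩
      -- x k < x i < x j ≤ x 0 ; triple (0, i, k) is a 321
      have hi0 : (⟨0, hn⟩ : Fin n) < i := by
        rw [Fin.lt_def]
        simp only
        rcases Nat.eq_zero_or_pos i.1 with h0 | hpos
        · exfalso
          have : i = ⟨0, hn⟩ := Fin.ext h0
          have hle := hx0 j
          rw [← this] at hle
          omega
        · exact hpos
      exact h321 ⟨⟨0, hn⟩, i, k, hi0, lt_trans hij hjk,
        lt_of_lt_of_le h2 (hx0 j), h1⟩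
  refine ⟨main, ?_⟩
  ext x
  simp only [Set.mem_setOf_eq]
  constructor
  · rintro ⟨h1, h2⟩
    exact ⟨h1, (main x h1).mp h2⟩
  · rintro ⟨h1, h2⟩
    exact ⟨h1, (main x h1).mpr h2⟩
end
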